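/- arXiv:2112.02911 — 2 statements merged into one kernel-verified Lean document; each statement's English description precedes it below -/
import Mathlib

section
/- Let (Ω, S) be a coherent configuration with all fibers isomorphic to C_p ≀ C_p and all inter-fiber relations of valency p. Let N be the union of all within-fiber relations together with all non-regular relations. Then ⋃_{s ∈ N} s is an equivalence relation on Ω. -/
open Finset
open scoped Classical

/-- A coherent configuration on a finite set `Ω`: a partition `S` of `Ω × Ω` into nonempty
relations such that the diagonal is a union of relations, `S` is closed under transposition,
and the intersection numbers `c r s u` are well defined. -/
structure CoherentConfig (Ω : Type) [Fintype Ω] [DecidableEq Ω] where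
  S : Finset (Finset (Ω × Ω))
  nonempty_mem : ∀ s ∈ S, s.Nonempty
  partition : ∀ x : Ω × Ω, ∃! s, s ∈ S ∧ x ∈ s
  diag_union : ∀ s ∈ S, (∃ x ∈ s, x.1 = x.2) → ∀ y ∈ s, y.1 = y.2
  symm_mem : ∀ s ∈ S, s.image Prod.swap ∈ S
  c : Finset (Ω × Ω) → Finset (Ω × Ω) → Finset (Ω × Ω) → ℕ
  c_spec : ∀ r ∈ S, ∀ s ∈ S, ∀ u ∈ S, ∀ x ∈ u,
    (Finset.univ.filter (fun γ : Ω => (x.1, γ) ∈ r ∧ (γ, x.2) ∈ s)).card = c r s u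

variable {Ω : Type} [Fintype Ω] [DecidableEq Ω]

/-- The diagonal relation of a subset `Δ ⊆ Ω`. -/
def diagRel (Δ : Finset Ω) : Finset (Ω × Ω) := Δ.image (fun d => (d, d))

/-- `Δ` is a fiber of the coherent configuration if its diagonal is a basis relation. -/
def IsFiber (A : CoherentConfig Ω) (Δ : Finset Ω) : Prop := diagRel Δ ∈ A.S

/-- The transpose of a relation. -/
def star (s : Finset (Ω × Ω)) : Finset (Ω × Ω) := s.image Prod.swap

/-- Every point in the domain of `s` has exactly `n` out-neighbours along `s`. -/
def HasValency (s : Finset (Ω × Ω)) (n : ℕ) : Prop :=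
  ∀ x ∈ s, (Finset.univ.filter fun γ : Ω => (x.1, γ) ∈ s).card = n

/-- `s` is a thin basis relation of the fiber scheme on `Δ`. -/
def IsThinOn (A : CoherentConfig Ω) (Δ : Finset Ω) (s : Finset (Ω × Ω)) : Prop :=
  s ∈ A.S ∧ s ⊆ Δ ×ˢ Δ ∧ HasValency s 1

/-- The complex product of two sets of basis relations. -/
def cprod (A : CoherentConfig Ω) (T U : Finset (Finset (Ω × Ω))) : Finset (Finset (Ω × Ω)) :=
  A.S.filter fun u => ∃ t ∈ T, ∃ v ∈ U, A.c t v u ≠ 0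

/-- `s` is a regular relation: `s s* s = {s}` as a complex product. -/
def Regular (A : CoherentConfig Ω) (s : Finset (Ω × Ω)) : Prop :=
  cprod A (cprod A {s} {star s}) {s} = {s}

/-- The fiber scheme on `Δ` is isomorphic to the wreath product `C_p ≀ C_p`:
it has degree `p²`, exactly `p` thin relations forming a closed subset,
and all other basis relations have valency `p`. -/
def WreathFiber (p : ℕ) (A : CoherentConfig Ω) (Δ : Finset Ω) : Prop :=
  IsFiber A Δ ∧ Δ.card = p ^ 2 ∧
  (A.S.filter fun s => IsThinOn A Δ s).card = p ∧
  (∀ s ∈ A.S, s ⊆ Δ ×ˢ Δ → HasValency s 1 ∨ HasValency s p) ∧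
  (∀ s t u : Finset (Ω × Ω), IsThinOn A Δ s → IsThinOn A Δ t → u ∈ A.S →
    A.c s (star t) u ≠ 0 → IsThinOn A Δ u)

/-- The adjacency matrix of a relation. -/
def adjM (s : Finset (Ω × Ω)) : Matrix Ω Ω ℂ := fun α β => if (α, β) ∈ s then 1 else 0

----------------------------------------------------------------------
-- auxiliary development
----------------------------------------------------------------------

namespace CC
set_option linter.unusedSectionVars false

variable (A : CoherentConfig Ω)

/-- The basis relation containing a given pair. -/
noncomputable def relOf (q : Ω × Ω) : Finset (Ω × Ω) := (A.partition q).exists.choose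

lemma relOf_mem_S (q : Ω × Ω) : relOf A q ∈ A.S := (A.partition q).exists.choose_spec.1

lemma mem_relOf (q : Ω × Ω) : q ∈ relOf A q := (A.partition q).exists.choose_spec.2

variable {A}

lemma rel_eq_of_mem {s t : Finset (Ω × Ω)} {q : Ω × Ω} (hs : s ∈ A.S) (ht : t ∈ A.S)
    (hqs : q ∈ s) (hqt : q ∈ t) : s = t := by
  obtain ⟨u, -, hu⟩ := A.partition q
  rw [hu s ⟨hs, hqs⟩, hu t ⟨ht, hqt⟩]

lemma eq_relOf {s : Finset (Ω × Ω)} {q : Ω × Ω} (hs : s ∈ A.S) (hq : q ∈ s) :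
    s = relOf A q := rel_eq_of_mem hs (relOf_mem_S A q) hq (mem_relOf A q)

@[simp] lemma mem_star {s : Finset (Ω × Ω)} {x y : Ω} : (x, y) ∈ star s ↔ (y, x) ∈ s := by
  constructor
  · rintro h
    obtain ⟨⟨a, b⟩, hab, h2⟩ := Finset.mem_image.1 h
    cases h2; exact hab
  · intro h; exact Finset.mem_image.2 ⟨(y, x), h, rfl⟩

@[simp] lemma star_star (s : Finset (Ω × Ω)) : star (star s) = s := by
  ext ⟨x, y⟩; simp

lemma star_mem_S {s : Finset (Ω × Ω)} (hs : s ∈ A.S) : star s ∈ A.S := A.symm_mem s hs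

lemma star_subset {s : Finset (Ω × Ω)} {Δ Γ : Finset Ω} (h : s ⊆ Δ ×ˢ Γ) :
    star s ⊆ Γ ×ˢ Δ := by
  rintro ⟨x, y⟩ hxy
  rw [mem_star] at hxy
  have := h hxy
  simp only [Finset.mem_product] at this ⊢
  exact ⟨this.2, this.1⟩

@[simp] lemma mem_diagRel {Δ : Finset Ω} {x y : Ω} : (x, y) ∈ diagRel Δ ↔ x ∈ Δ ∧ x = y := by
  constructor
  · intro h
    obtain ⟨d, hd, h2⟩ := Finset.mem_image.1 h
    cases h2; exact ⟨hd, rfl⟩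
  · rintro ⟨h, rfl⟩; exact Finset.mem_image.2 ⟨x, h, rfl⟩

/-- If there is one triangle over `(r, s, u)`, the intersection number is nonzero. -/
lemma c_ne_zero {r s u : Finset (Ω × Ω)} (hr : r ∈ A.S) (hs : s ∈ A.S) (hu : u ∈ A.S)
    {x y z : Ω} (hxy : (x, y) ∈ r) (hyz : (y, z) ∈ s) (hxz : (x, z) ∈ u) :
    A.c r s u ≠ 0 := by
  have h := A.c_spec r hr s hs u hu (x, z) hxz
  rw [← h]
  have : y ∈ Finset.univ.filter (fun γ : Ω => ((x, z).1, γ) ∈ r ∧ (γ, (x, z).2) ∈ s) := by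
    simp [hxy, hyz]
  intro h0
  rw [Finset.card_eq_zero] at h0
  rw [h0] at this
  exact absurd this (Finset.notMem_empty _)

/-- If the intersection number is nonzero, every pair of `u` has a middle point. -/
lemma exists_mid {r s u : Finset (Ω × Ω)} (hr : r ∈ A.S) (hs : s ∈ A.S) (hu : u ∈ A.S)
    (hc : A.c r s u ≠ 0) {x z : Ω} (hxz : (x, z) ∈ u) :
    ∃ y, (x, y) ∈ r ∧ (y, z) ∈ s := by
  have h := A.c_spec r hr s hs u hu (x, z) hxz
  rcases Finset.card_pos.1 (by omega : 0 < (Finset.univ.filter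
      (fun γ : Ω => ((x, z).1, γ) ∈ r ∧ (γ, (x, z).2) ∈ s)).card) with ⟨y, hy⟩
  simp only [Finset.mem_filter] at hy
  exact ⟨y, hy.2⟩

/-- Combined: a single triangle gives middles everywhere. -/
lemma mid {r s u : Finset (Ω × Ω)} (hr : r ∈ A.S) (hs : s ∈ A.S) (hu : u ∈ A.S)
    {x₀ y₀ z₀ : Ω} (h1 : (x₀, y₀) ∈ r) (h2 : (y₀, z₀) ∈ s) (h3 : (x₀, z₀) ∈ u)
    {x z : Ω} (hxz : (x, z) ∈ u) : ∃ y, (x, y) ∈ r ∧ (y, z) ∈ s :=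
  exists_mid hr hs hu (c_ne_zero hr hs hu h1 h2 h3) hxz


----------------------------------------------------------------------
-- fibers
----------------------------------------------------------------------

variable (A)

/-- The fiber containing a point. -/
noncomputable def fib (α : Ω) : Finset Ω := (relOf A (α, α)).image Prod.fst

lemma relOf_diag_eq (α : Ω) : relOf A (α, α) = diagRel (fib A α) := by
  have hdiag : ∀ q ∈ relOf A (α, α), (q : Ω × Ω).1 = q.2 :=
    A.diag_union _ (relOf_mem_S A _) ⟨(α, α), mem_relOf A _, rfl⟩
  ext ⟨x, y⟩
  simp only [mem_diagRel]
  constructor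
  · intro h
    have hx : x = y := hdiag _ h
    subst hx
    exact ⟨Finset.mem_image.2 ⟨(x, x), h, rfl⟩, rfl⟩
  · rintro ⟨hx, rfl⟩
    obtain ⟨⟨a, b⟩, hab, h2⟩ := Finset.mem_image.1 hx
    have : a = b := hdiag _ hab
    subst this; cases h2; exact hab

lemma fib_isFiber (α : Ω) : IsFiber A (fib A α) := by
  have := relOf_mem_S A (α, α)
  rwa [relOf_diag_eq] at this

lemma mem_fib_self (α : Ω) : α ∈ fib A α :=
  Finset.mem_image.2 ⟨(α, α), mem_relOf A _, rfl⟩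

variable {A}

lemma fib_eq {Δ : Finset Ω} {α : Ω} (hΔ : IsFiber A Δ) (hα : α ∈ Δ) : fib A α = Δ := by
  have h1 : (α, α) ∈ diagRel Δ := mem_diagRel.2 ⟨hα, rfl⟩
  have h2 : diagRel Δ = relOf A (α, α) := eq_relOf hΔ h1
  have : fib A α = (diagRel Δ).image Prod.fst := by
    rw [fib, ← h2]
  rw [this]
  ext x
  simp only [Finset.mem_image]
  constructor
  · rintro ⟨⟨a, b⟩, hab, h3⟩
    obtain ⟨ha, h4⟩ := mem_diagRel.1 hab
    cases h3; exact ha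
  · intro hx; exact ⟨(x, x), mem_diagRel.2 ⟨hx, rfl⟩, rfl⟩

lemma rel_sub {s : Finset (Ω × Ω)} {x y : Ω} (hs : s ∈ A.S) (hxy : (x, y) ∈ s) :
    s ⊆ fib A x ×ˢ fib A y := by
  rintro ⟨x', y'⟩ hq
  have hfx := fib_isFiber A x
  have hfy := fib_isFiber A y
  have hxx : (x, x) ∈ diagRel (fib A x) := mem_diagRel.2 ⟨mem_fib_self A x, rfl⟩
  have hyy : (y, y) ∈ diagRel (fib A y) := mem_diagRel.2 ⟨mem_fib_self A y, rfl⟩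
  have h1 : ∃ γ, (x', γ) ∈ diagRel (fib A x) ∧ (γ, y') ∈ s :=
    mid hfx hs hs hxx hxy hxy hq
  have h2 : ∃ γ, (x', γ) ∈ s ∧ (γ, y') ∈ diagRel (fib A y) :=
    mid hs hfy hs hxy hyy hxy hq
  obtain ⟨γ₁, hγ1, -⟩ := h1
  obtain ⟨γ₂, -, hγ2⟩ := h2
  obtain ⟨ha, -⟩ := mem_diagRel.1 hγ1
  obtain ⟨hb, hc⟩ := mem_diagRel.1 hγ2
  subst hc
  exact Finset.mem_product.2 ⟨ha, hb⟩

lemma dom_full {s : Finset (Ω × Ω)} {Δ : Finset Ω} (hs : s ∈ A.S) (hΔ : IsFiber A Δ)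
    {x₀ y₀ : Ω} (h0 : (x₀, y₀) ∈ s) (hx₀ : x₀ ∈ Δ) {x : Ω} (hx : x ∈ Δ) :
    ∃ y, (x, y) ∈ s := by
  have hss := star_mem_S hs
  have hd : (x₀, x₀) ∈ diagRel Δ := mem_diagRel.2 ⟨hx₀, rfl⟩
  have hxx : (x, x) ∈ diagRel Δ := mem_diagRel.2 ⟨hx, rfl⟩
  obtain ⟨y, hy, -⟩ := mid hs hss hΔ h0 (mem_star.2 h0) hd hxx
  exact ⟨y, hy⟩

/-- first coordinates of a relation lie in a single fiber -/
lemma fst_mem_fiber {s : Finset (Ω × Ω)} {Δ Γ : Finset Ω} (hsub : s ⊆ Δ ×ˢ Γ)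
    {x y : Ω} (hxy : (x, y) ∈ s) : x ∈ Δ := (Finset.mem_product.1 (hsub hxy)).1

lemma snd_mem_fiber {s : Finset (Ω × Ω)} {Δ Γ : Finset Ω} (hsub : s ⊆ Δ ×ˢ Γ)
    {x y : Ω} (hxy : (x, y) ∈ s) : y ∈ Γ := (Finset.mem_product.1 (hsub hxy)).2

----------------------------------------------------------------------
-- degrees
----------------------------------------------------------------------

/-- out-degree -/
noncomputable def deg (s : Finset (Ω × Ω)) (x : Ω) : ℕ :=
  (Finset.univ.filter fun z => (x, z) ∈ s).card

lemma deg_of_valency {s : Finset (Ω × Ω)} {n : ℕ} (hv : HasValency s n) {x y : Ω}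
    (hxy : (x, y) ∈ s) : deg s x = n := hv (x, y) hxy

lemma deg_pos_of_mem {s : Finset (Ω × Ω)} {x y : Ω} (hxy : (x, y) ∈ s) : 0 < deg s x :=
  Finset.card_pos.2 ⟨y, Finset.mem_filter.2 ⟨Finset.mem_univ _, hxy⟩⟩

lemma exists_deg_eq {s : Finset (Ω × Ω)} {Δ Γ : Finset Ω} (hs : s ∈ A.S) (hΔ : IsFiber A Δ)
    (hsub : s ⊆ Δ ×ˢ Γ) (hne : s.Nonempty) {x : Ω} (hx : x ∈ Δ) {n : ℕ}
    (hv : HasValency s n) : deg s x = n := by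
  obtain ⟨⟨x₀, y₀⟩, h0⟩ := hne
  obtain ⟨y, hy⟩ := dom_full hs hΔ h0 (fst_mem_fiber hsub h0) hx
  exact deg_of_valency hv hy

lemma filter_fst_card {s : Finset (Ω × Ω)} (x : Ω) :
    (s.filter fun q => q.1 = x).card = deg s x := by
  rw [deg]
  apply Finset.card_bij (fun (q : Ω × Ω) _ => q.2)
  · rintro ⟨a, b⟩ ha
    simp only [Finset.mem_filter] at ha ⊢
    obtain ⟨h1, h2⟩ := ha
    subst h2
    exact ⟨Finset.mem_univ _, h1⟩
  · rintro ⟨a, b⟩ ha ⟨a', b'⟩ ha' h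
    simp only [Finset.mem_filter] at ha ha'
    cases h
    rw [ha.2, ha'.2]
  · intro z hz
    simp only [Finset.mem_filter] at hz
    exact ⟨(x, z), Finset.mem_filter.2 ⟨hz.2, rfl⟩, rfl⟩

lemma card_eq_sum_deg {s : Finset (Ω × Ω)} {Δ Γ : Finset Ω} (hsub : s ⊆ Δ ×ˢ Γ) :
    s.card = ∑ x ∈ Δ, deg s x := by
  rw [Finset.card_eq_sum_card_fiberwise (f := Prod.fst) (t := Δ)
    (fun q hq => fst_mem_fiber hsub hq)]
  exact Finset.sum_congr rfl fun x _ => filter_fst_card x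

lemma card_of_valency {s : Finset (Ω × Ω)} {Δ Γ : Finset Ω} {n : ℕ} (hs : s ∈ A.S)
    (hΔ : IsFiber A Δ) (hsub : s ⊆ Δ ×ˢ Γ) (hne : s.Nonempty) (hv : HasValency s n) :
    s.card = Δ.card * n := by
  rw [card_eq_sum_deg hsub]
  rw [Finset.sum_congr rfl fun x hx => exists_deg_eq hs hΔ hsub hne hx hv]
  simp [Finset.sum_const, mul_comm]


----------------------------------------------------------------------
-- thin relations
----------------------------------------------------------------------

lemma star_card (s : Finset (Ω × Ω)) : (star s).card = s.card :=
  Finset.card_image_of_injective _ Prod.swap_injective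

variable {p : ℕ} {Δ : Finset Ω}

lemma wf_isFiber (hw : WreathFiber p A Δ) : IsFiber A Δ := hw.1
lemma wf_card (hw : WreathFiber p A Δ) : Δ.card = p ^ 2 := hw.2.1
lemma wf_thins (hw : WreathFiber p A Δ) :
    (A.S.filter fun s => IsThinOn A Δ s).card = p := hw.2.2.1
lemma wf_val (hw : WreathFiber p A Δ) :
    ∀ s ∈ A.S, s ⊆ Δ ×ˢ Δ → HasValency s 1 ∨ HasValency s p := hw.2.2.2.1
lemma wf_closed (hw : WreathFiber p A Δ) :
    ∀ s t u : Finset (Ω × Ω), IsThinOn A Δ s → IsThinOn A Δ t → u ∈ A.S →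
      A.c s (star t) u ≠ 0 → IsThinOn A Δ u := hw.2.2.2.2

lemma diag_thin (hw : WreathFiber p A Δ) : IsThinOn A Δ (diagRel Δ) := by
  refine ⟨wf_isFiber hw, ?_, ?_⟩
  · rintro ⟨x, y⟩ h
    obtain ⟨hx, rfl⟩ := mem_diagRel.1 h
    exact Finset.mem_product.2 ⟨hx, hx⟩
  · rintro ⟨x, y⟩ h
    obtain ⟨hx, rfl⟩ := mem_diagRel.1 h
    have : (Finset.univ.filter fun γ : Ω => ((x, x).1, γ) ∈ diagRel Δ) = {x} := by
      ext z
      simp only [Finset.mem_filter, Finset.mem_univ, true_and, mem_diagRel,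
        Finset.mem_singleton]
      constructor
      · rintro ⟨-, rfl⟩; rfl
      · rintro rfl; exact ⟨hx, rfl⟩
    rw [this, Finset.card_singleton]

lemma thin_card (hw : WreathFiber p A Δ) {τ : Finset (Ω × Ω)} (ht : IsThinOn A Δ τ) :
    τ.card = Δ.card :=  by
  have := card_of_valency ht.1 (wf_isFiber hw) ht.2.1 (A.nonempty_mem _ ht.1) ht.2.2
  omega

lemma thin_star (hp : p.Prime) (hw : WreathFiber p A Δ) {τ : Finset (Ω × Ω)}
    (ht : IsThinOn A Δ τ) : IsThinOn A Δ (star τ) := by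
  have hS : star τ ∈ A.S := star_mem_S ht.1
  have hsub : star τ ⊆ Δ ×ˢ Δ := star_subset ht.2.1
  refine ⟨hS, hsub, ?_⟩
  rcases wf_val hw (star τ) hS hsub with h | h
  · exact h
  · exfalso
    have hcard : (star τ).card = Δ.card * p :=
      card_of_valency hS (wf_isFiber hw) hsub (A.nonempty_mem _ hS) h
    have h2 : (star τ).card = Δ.card := by rw [star_card, thin_card hw ht]
    have hΔpos : 0 < Δ.card := by
      rw [wf_card hw]; exact pow_pos hp.pos 2
    have hp2 : 2 ≤ p := hp.two_le
    nlinarith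

lemma thin_unique (hw : WreathFiber p A Δ) {τ : Finset (Ω × Ω)} (ht : IsThinOn A Δ τ)
    {x : Ω} (hx : x ∈ Δ) : ∃ y, (x, y) ∈ τ ∧ ∀ y', (x, y') ∈ τ → y' = y := by
  obtain ⟨⟨x₀, y₀⟩, h0⟩ := A.nonempty_mem _ ht.1
  obtain ⟨y, hy⟩ := dom_full ht.1 (wf_isFiber hw) h0 (fst_mem_fiber ht.2.1 h0) hx
  refine ⟨y, hy, fun y' hy' => ?_⟩
  by_contra hne
  have h1 : deg τ x = 1 := deg_of_valency ht.2.2 hy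
  have : ({y, y'} : Finset Ω) ⊆ Finset.univ.filter fun z => (x, z) ∈ τ := by
    intro z hz
    rcases Finset.mem_insert.1 hz with rfl | hz
    · exact Finset.mem_filter.2 ⟨Finset.mem_univ _, hy⟩
    · rw [Finset.mem_singleton] at hz; subst hz
      exact Finset.mem_filter.2 ⟨Finset.mem_univ _, hy'⟩
  have h2 : ({y, y'} : Finset Ω).card = 2 := by
    rw [Finset.card_insert_of_notMem (by simpa using fun h => hne h.symm),
      Finset.card_singleton]
  have := Finset.card_le_card this
  rw [h2] at this
  rw [deg] at h1
  omega

lemma thin_inj (hp : p.Prime) (hw : WreathFiber p A Δ) {τ : Finset (Ω × Ω)}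
    (ht : IsThinOn A Δ τ) {x x' y : Ω} (h1 : (x, y) ∈ τ) (h2 : (x', y) ∈ τ) : x = x' := by
  have hst := thin_star hp hw ht
  obtain ⟨z, hz, hu⟩ := thin_unique hw hst (snd_mem_fiber ht.2.1 h1)
  have e1 := hu x (mem_star.2 h1)
  have e2 := hu x' (mem_star.2 h2)
  rw [e1, e2]

/-- the composition of two thin relations is thin -/
lemma thin_comp (hp : p.Prime) (hw : WreathFiber p A Δ) {τ₁ τ₂ u : Finset (Ω × Ω)}
    (h1 : IsThinOn A Δ τ₁) (h2 : IsThinOn A Δ τ₂) (hu : u ∈ A.S) {x y z : Ω}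
    (hxy : (x, y) ∈ τ₁) (hyz : (y, z) ∈ τ₂) (hxz : (x, z) ∈ u) : IsThinOn A Δ u := by
  apply wf_closed hw τ₁ (star τ₂) u h1 (thin_star hp hw h2) hu
  rw [star_star]
  exact c_ne_zero h1.1 h2.1 hu hxy hyz hxz

----------------------------------------------------------------------
-- the thin equivalence and blocks
----------------------------------------------------------------------

variable (A Δ)

/-- the union of the thin relations, as a binary predicate -/
def ERel (x y : Ω) : Prop := ∃ τ : Finset (Ω × Ω), IsThinOn A Δ τ ∧ (x, y) ∈ τ

/-- the block of a point -/
noncomputable def blk (x : Ω) : Finset Ω := Δ.filter (ERel A Δ x)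

variable {A Δ}

lemma ERel.refl {x : Ω} (hw : WreathFiber p A Δ) (hx : x ∈ Δ) : ERel A Δ x x :=
  ⟨diagRel Δ, diag_thin hw, mem_diagRel.2 ⟨hx, rfl⟩⟩

lemma ERel.symm {x y : Ω} (hp : p.Prime) (hw : WreathFiber p A Δ) (h : ERel A Δ x y) :
    ERel A Δ y x := by
  obtain ⟨τ, ht, hxy⟩ := h
  exact ⟨star τ, thin_star hp hw ht, mem_star.2 hxy⟩

lemma ERel.trans {x y z : Ω} (hp : p.Prime) (hw : WreathFiber p A Δ) (h1 : ERel A Δ x y)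
    (h2 : ERel A Δ y z) : ERel A Δ x z := by
  obtain ⟨τ₁, ht1, hxy⟩ := h1
  obtain ⟨τ₂, ht2, hyz⟩ := h2
  exact ⟨relOf A (x, z), thin_comp hp hw ht1 ht2 (relOf_mem_S A _) hxy hyz (mem_relOf A _),
    mem_relOf A _⟩

lemma ERel.mem_left {x y : Ω} (h : ERel A Δ x y) : x ∈ Δ :=
  fst_mem_fiber h.choose_spec.1.2.1 h.choose_spec.2

lemma ERel.mem_right {x y : Ω} (h : ERel A Δ x y) : y ∈ Δ :=
  snd_mem_fiber h.choose_spec.1.2.1 h.choose_spec.2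

lemma mem_blk {x y : Ω} : y ∈ blk A Δ x ↔ ERel A Δ x y := by
  rw [blk, Finset.mem_filter]
  exact ⟨fun h => h.2, fun h => ⟨h.mem_right, h⟩⟩

lemma rel_thin_of_E {s : Finset (Ω × Ω)} {x y : Ω} (hs : s ∈ A.S) (hxy : (x, y) ∈ s)
    (hE : ERel A Δ x y) : IsThinOn A Δ s := by
  obtain ⟨τ, ht, h2⟩ := hE
  rwa [rel_eq_of_mem hs ht.1 hxy h2]

lemma card_blk (hw : WreathFiber p A Δ) {x : Ω} (hx : x ∈ Δ) : (blk A Δ x).card = p := by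
  rw [← wf_thins hw]
  refine Eq.symm (Finset.card_bij
    (fun τ (hτ : τ ∈ A.S.filter fun s => IsThinOn A Δ s) =>
      (thin_unique hw (Finset.mem_filter.1 hτ).2 hx).choose) ?_ ?_ ?_)
  · intro τ hτ
    have ht := (Finset.mem_filter.1 hτ).2
    have hs := (thin_unique hw ht hx).choose_spec.1
    exact mem_blk.2 ⟨τ, ht, hs⟩
  · intro τ hτ τ' hτ' heq
    have ht := (Finset.mem_filter.1 hτ).2
    have ht' := (Finset.mem_filter.1 hτ').2
    have hs := (thin_unique hw ht hx).choose_spec.1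
    have hs' := (thin_unique hw ht' hx).choose_spec.1
    rw [heq] at hs
    exact rel_eq_of_mem ht.1 ht'.1 hs hs'
  · intro y hy
    obtain ⟨τ, ht, hxy⟩ := mem_blk.1 hy
    refine ⟨τ, Finset.mem_filter.2 ⟨ht.1, ht⟩, ?_⟩
    exact ((thin_unique hw ht hx).choose_spec.2 y hxy).symm


----------------------------------------------------------------------
-- composition of relations
----------------------------------------------------------------------

/-- relational composition of finsets of pairs -/
noncomputable def comp (s t : Finset (Ω × Ω)) : Finset (Ω × Ω) :=
  ((s ×ˢ t).filter fun q => q.1.2 = q.2.1).image fun q => (q.1.1, q.2.2)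

lemma mem_comp {s t : Finset (Ω × Ω)} {x z : Ω} :
    (x, z) ∈ comp s t ↔ ∃ y, (x, y) ∈ s ∧ (y, z) ∈ t := by
  constructor
  · intro h
    obtain ⟨⟨⟨a, b⟩, ⟨c, d⟩⟩, hq, h2⟩ := Finset.mem_image.1 h
    obtain ⟨hq1, hq2⟩ := Finset.mem_filter.1 hq
    obtain ⟨h3, h4⟩ := Finset.mem_product.1 hq1
    simp only at hq2 h3 h4
    subst hq2
    cases h2
    exact ⟨b, h3, h4⟩
  · rintro ⟨y, h1, h2⟩
    apply Finset.mem_image.2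
    refine ⟨((x, y), (y, z)), Finset.mem_filter.2 ⟨Finset.mem_product.2 ⟨h1, h2⟩, rfl⟩, rfl⟩

lemma comp_mem {s t : Finset (Ω × Ω)} {x y z : Ω} (h1 : (x, y) ∈ s) (h2 : (y, z) ∈ t) :
    (x, z) ∈ comp s t := mem_comp.2 ⟨y, h1, h2⟩

lemma comp_assoc (s t u : Finset (Ω × Ω)) : comp (comp s t) u = comp s (comp t u) := by
  ext ⟨x, z⟩
  constructor
  · intro h
    obtain ⟨y, h1, h3⟩ := mem_comp.1 h
    obtain ⟨a, h1, h2⟩ := mem_comp.1 h1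
    exact mem_comp.2 ⟨a, h1, mem_comp.2 ⟨y, h2, h3⟩⟩
  · intro h
    obtain ⟨y, h1, h2⟩ := mem_comp.1 h
    obtain ⟨a, h2, h3⟩ := mem_comp.1 h2
    exact mem_comp.2 ⟨a, mem_comp.2 ⟨y, h1, h2⟩, h3⟩

lemma comp_subset {s t : Finset (Ω × Ω)} {Δ Γ Λ : Finset Ω} (h1 : s ⊆ Δ ×ˢ Γ)
    (h2 : t ⊆ Γ ×ˢ Λ) : comp s t ⊆ Δ ×ˢ Λ := by
  rintro ⟨x, z⟩ h
  obtain ⟨y, hy1, hy2⟩ := mem_comp.1 h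
  exact Finset.mem_product.2 ⟨fst_mem_fiber h1 hy1, snd_mem_fiber h2 hy2⟩

lemma comp_diag {s : Finset (Ω × Ω)} {Δ Γ : Finset Ω} (h : s ⊆ Δ ×ˢ Γ) :
    comp s (diagRel Γ) = s := by
  ext ⟨x, z⟩
  simp only [mem_comp, mem_diagRel]
  constructor
  · rintro ⟨y, h1, h2, rfl⟩; exact h1
  · intro h1; exact ⟨z, h1, snd_mem_fiber h h1, rfl⟩

lemma comp_star_self (hp : p.Prime) {Γ : Finset Ω} (hw : WreathFiber p A Γ)
    {τ : Finset (Ω × Ω)} (ht : IsThinOn A Γ τ) : comp τ (star τ) = diagRel Γ := by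
  ext ⟨x, z⟩
  simp only [mem_comp, mem_star, mem_diagRel]
  constructor
  · rintro ⟨y, h1, h2⟩
    exact ⟨fst_mem_fiber ht.2.1 h1, thin_inj hp hw ht h1 h2⟩
  · rintro ⟨hx, rfl⟩
    obtain ⟨y, hy, -⟩ := thin_unique hw ht hx
    exact ⟨y, hy, hy⟩

/-- composing with a thin relation preserves out-degrees -/
lemma deg_comp_thin {s τ : Finset (Ω × Ω)} {Γ : Finset Ω} (hw : WreathFiber p A Γ)
    (ht : IsThinOn A Γ τ) (hp : p.Prime) {Δ : Finset Ω} (hsub : s ⊆ Δ ×ˢ Γ) (x : Ω) :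
    deg (comp s τ) x = deg s x := by
  rw [deg, deg]
  refine Eq.symm (Finset.card_bij (fun y (hy : y ∈ Finset.univ.filter fun z => (x, z) ∈ s) =>
    (thin_unique hw ht (snd_mem_fiber hsub (Finset.mem_filter.1 hy).2)).choose) ?_ ?_ ?_)
  · intro y hy
    have h1 := (Finset.mem_filter.1 hy).2
    have h2 := (thin_unique hw ht (snd_mem_fiber hsub h1)).choose_spec.1
    exact Finset.mem_filter.2 ⟨Finset.mem_univ _, comp_mem h1 h2⟩
  · intro y hy y' hy' heq
    have h1 := (Finset.mem_filter.1 hy).2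
    have h1' := (Finset.mem_filter.1 hy').2
    have h2 := (thin_unique hw ht (snd_mem_fiber hsub h1)).choose_spec.1
    have h2' := (thin_unique hw ht (snd_mem_fiber hsub h1')).choose_spec.1
    rw [heq] at h2
    exact thin_inj hp hw ht h2 h2'
  · intro z hz
    obtain ⟨y, h1, h2⟩ := mem_comp.1 (Finset.mem_filter.1 hz).2
    refine ⟨y, Finset.mem_filter.2 ⟨Finset.mem_univ _, h1⟩, ?_⟩
    exact ((thin_unique hw ht (snd_mem_fiber hsub h1)).choose_spec.2 z h2).symm

/-- the right translate of a relation by a thin relation is again a basis relation -/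
lemma comp_rel {s τ : Finset (Ω × Ω)} {Δ Γ : Finset Ω} {n : ℕ} (hp : p.Prime)
    (hs : s ∈ A.S) (hΔ : IsFiber A Δ) (hsub : s ⊆ Δ ×ˢ Γ) (hw' : WreathFiber p A Γ)
    (ht : IsThinOn A Γ τ) (hn : 0 < n) (hvs : ∀ x ∈ Δ, deg s x = n)
    (hval : ∀ w ∈ A.S, w ⊆ comp s τ → w.Nonempty → ∀ x ∈ Δ, deg w x = n) :
    comp s τ ∈ A.S := by
  have hCsub : comp s τ ⊆ Δ ×ˢ Γ := comp_subset hsub ht.2.1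
  have hclaim : ∀ q ∈ comp s τ, relOf A q ⊆ comp s τ := by
    rintro ⟨x₁, z₁⟩ hq ⟨x, z⟩ hxz
    obtain ⟨y₁, h1, h2⟩ := mem_comp.1 hq
    obtain ⟨y, hy1, hy2⟩ := mid hs ht.1 (relOf_mem_S A _) h1 h2 (mem_relOf A _) hxz
    exact comp_mem hy1 hy2
  obtain ⟨⟨x₀, y₀⟩, h0⟩ := A.nonempty_mem _ hs
  obtain ⟨z₀, hz₀, -⟩ := thin_unique hw' ht (snd_mem_fiber hsub h0)
  have hq₀ : (x₀, z₀) ∈ comp s τ := comp_mem h0 hz₀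
  set w := relOf A (x₀, z₀) with hw_def
  have hwC : w ⊆ comp s τ := hclaim _ hq₀
  have : comp s τ = w := by
    apply Finset.Subset.antisymm _ hwC
    rintro ⟨x₁, z₁⟩ hq₁
    set w₁ := relOf A (x₁, z₁) with hw1_def
    have hw1C : w₁ ⊆ comp s τ := hclaim _ hq₁
    by_contra hne
    have hne' : w₁ ≠ w := by
      intro h
      rw [← h] at hne
      exact hne (mem_relOf A _)
    have hx₁ : x₁ ∈ Δ := (Finset.mem_product.1 (hCsub hq₁)).1
    -- degrees
    have hdC : deg (comp s τ) x₁ = n := by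
      rw [deg_comp_thin hw' ht hp hsub]; exact hvs x₁ hx₁
    have hdw : deg w x₁ = n := by
      apply hval w (relOf_mem_S A _) hwC ⟨_, mem_relOf A _⟩ x₁ hx₁
    have hdw₁ : 0 < deg w₁ x₁ := deg_pos_of_mem (mem_relOf A (x₁, z₁))
    have hdisj : Disjoint (Finset.univ.filter fun z => (x₁, z) ∈ w)
        (Finset.univ.filter fun z => (x₁, z) ∈ w₁) := by
      rw [Finset.disjoint_left]
      intro a ha ha'
      have h1 := (Finset.mem_filter.1 ha).2
      have h2 := (Finset.mem_filter.1 ha').2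
      exact hne' (rel_eq_of_mem (relOf_mem_S A _) (relOf_mem_S A _) h2 h1)
    have hsubU : (Finset.univ.filter fun z => (x₁, z) ∈ w) ∪
        (Finset.univ.filter fun z => (x₁, z) ∈ w₁) ⊆
        Finset.univ.filter fun z => (x₁, z) ∈ comp s τ := by
      intro a ha
      rcases Finset.mem_union.1 ha with h | h
      · exact Finset.mem_filter.2 ⟨Finset.mem_univ _, hwC (Finset.mem_filter.1 h).2⟩
      · exact Finset.mem_filter.2 ⟨Finset.mem_univ _, hw1C (Finset.mem_filter.1 h).2⟩
    have := Finset.card_le_card hsubU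
    rw [Finset.card_union_of_disjoint hdisj] at this
    unfold deg at hdC hdw hdw₁
    omega
  rw [this]
  exact relOf_mem_S A _


lemma comp_thin_thin (hp : p.Prime) {Γ : Finset Ω} (hw : WreathFiber p A Γ)
    {τ τ' : Finset (Ω × Ω)} (ht : IsThinOn A Γ τ) (ht' : IsThinOn A Γ τ') :
    IsThinOn A Γ (comp τ τ') := by
  have hdeg1 : ∀ x ∈ Γ, deg τ x = 1 := fun x hx =>
    exists_deg_eq ht.1 (wf_isFiber hw) ht.2.1 (A.nonempty_mem _ ht.1) hx ht.2.2
  have hS : comp τ τ' ∈ A.S := by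
    refine comp_rel hp ht.1 (wf_isFiber hw) ht.2.1 hw ht' one_pos hdeg1 ?_
    intro w hwS hwsub hwne x hx
    have hsubΓ : w ⊆ Γ ×ˢ Γ := hwsub.trans (comp_subset ht.2.1 ht'.2.1)
    rcases wf_val hw w hwS hsubΓ with h | h
    · exact exists_deg_eq hwS (wf_isFiber hw) hsubΓ hwne hx h
    · exfalso
      obtain ⟨⟨x₁, z₁⟩, h₁⟩ := hwne
      have hd1 : deg (comp τ τ') x₁ = 1 := by
        rw [deg_comp_thin hw ht' hp ht.2.1]
        exact hdeg1 x₁ (fst_mem_fiber hsubΓ h₁)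
      have hdw : deg w x₁ = p := deg_of_valency h h₁
      have hle : deg w x₁ ≤ deg (comp τ τ') x₁ := Finset.card_le_card (by
        intro a ha
        exact Finset.mem_filter.2 ⟨Finset.mem_univ _, hwsub (Finset.mem_filter.1 ha).2⟩)
      have := hp.two_le
      omega
  refine ⟨hS, comp_subset ht.2.1 ht'.2.1, ?_⟩
  rintro ⟨x, z⟩ hxz
  have hd : deg (comp τ τ') x = 1 := by
    rw [deg_comp_thin hw ht' hp ht.2.1]
    exact hdeg1 x (fst_mem_fiber (comp_subset ht.2.1 ht'.2.1) hxz)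
  exact hd

----------------------------------------------------------------------
-- neighbourhoods, stabilizers and the key dichotomy
----------------------------------------------------------------------

/-- out-neighbourhood as a finset -/
noncomputable def nbhdF (v : Finset (Ω × Ω)) (x : Ω) : Finset Ω :=
  Finset.univ.filter fun z => (x, z) ∈ v

@[simp] lemma mem_nbhdF {v : Finset (Ω × Ω)} {x z : Ω} : z ∈ nbhdF v x ↔ (x, z) ∈ v := by
  rw [nbhdF, Finset.mem_filter]
  exact ⟨fun h => h.2, fun h => ⟨Finset.mem_univ _, h⟩⟩

lemma card_nbhdF (v : Finset (Ω × Ω)) (x : Ω) : (nbhdF v x).card = deg v x := rfl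

variable (A)

/-- the thin relations on a fiber -/
noncomputable def thinsF (Γ : Finset Ω) : Finset (Finset (Ω × Ω)) :=
  A.S.filter fun s => IsThinOn A Γ s

/-- the stabilizer of a relation under right thin translation -/
noncomputable def stab (Γ : Finset Ω) (v : Finset (Ω × Ω)) : Finset (Finset (Ω × Ω)) :=
  (thinsF A Γ).filter fun τ => comp v τ = v

/-- `v` is right-saturated with respect to the blocks of `Γ` -/
def Sat (Γ : Finset Ω) (v : Finset (Ω × Ω)) : Prop :=
  ∀ x z z', (x, z) ∈ v → ERel A Γ z z' → (x, z') ∈ v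

variable {A}

lemma mem_thinsF {Γ : Finset Ω} {τ : Finset (Ω × Ω)} :
    τ ∈ thinsF A Γ ↔ IsThinOn A Γ τ := by
  rw [thinsF, Finset.mem_filter]
  exact ⟨fun h => h.2, fun h => ⟨h.1, h⟩⟩

lemma comp_star_self' (hp : p.Prime) {Γ : Finset Ω} (hw : WreathFiber p A Γ)
    {τ : Finset (Ω × Ω)} (ht : IsThinOn A Γ τ) : comp (star τ) τ = diagRel Γ := by
  have := comp_star_self hp hw (thin_star hp hw ht)
  rwa [star_star] at this

/-- The bundle of hypotheses for a relation `v ⊆ Δ × Γ` of valency `p` whose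
thin right-translates are basis relations. -/
structure Ctx (A : CoherentConfig Ω) (p : ℕ) (Δ Γ : Finset Ω) (v : Finset (Ω × Ω)) :
    Prop where
  hp : p.Prime
  hv : v ∈ A.S
  hΔ : WreathFiber p A Δ
  hΓ : WreathFiber p A Γ
  hsub : v ⊆ Δ ×ˢ Γ
  htrans : ∀ τ : Finset (Ω × Ω), IsThinOn A Γ τ → comp v τ ∈ A.S
  hdeg : ∀ x ∈ Δ, deg v x = p

namespace Ctx

variable {Δ Γ : Finset Ω} {v : Finset (Ω × Ω)} (hc : Ctx A p Δ Γ v)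

include hc

/-- the stabilizer counts intersections of neighbourhoods with blocks -/
lemma stab_card {x z : Ω} (hxz : (x, z) ∈ v) :
    (nbhdF v x ∩ blk A Γ z).card = (stab A Γ v).card := by
  have hzΓ : z ∈ Γ := snd_mem_fiber hc.hsub hxz
  refine Eq.symm (Finset.card_bij (fun τ (hτ : τ ∈ stab A Γ v) =>
    (thin_unique hc.hΓ (mem_thinsF.1 (Finset.mem_filter.1 hτ).1) hzΓ).choose) ?_ ?_ ?_)
  · intro τ hτ
    obtain ⟨hτ1, hτ2⟩ := Finset.mem_filter.1 hτ
    have ht := mem_thinsF.1 hτ1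
    have hch := (thin_unique hc.hΓ (mem_thinsF.1 (Finset.mem_filter.1 hτ).1) hzΓ).choose_spec.1
    refine Finset.mem_inter.2 ⟨mem_nbhdF.2 ?_, mem_blk.2 ⟨τ, ht, hch⟩⟩
    have hmm : (x, (thin_unique hc.hΓ (mem_thinsF.1 (Finset.mem_filter.1 hτ).1)
        hzΓ).choose) ∈ comp v τ := comp_mem hxz hch
    have hsub2 : comp v τ ⊆ v := by rw [hτ2]
    exact hsub2 hmm
  · intro τ hτ τ' hτ' heq
    have hch := (thin_unique hc.hΓ (mem_thinsF.1 (Finset.mem_filter.1 hτ).1) hzΓ).choose_spec.1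
    have hch' := (thin_unique hc.hΓ (mem_thinsF.1 (Finset.mem_filter.1 hτ').1) hzΓ).choose_spec.1
    rw [heq] at hch
    exact rel_eq_of_mem (mem_thinsF.1 (Finset.mem_filter.1 hτ).1).1
      (mem_thinsF.1 (Finset.mem_filter.1 hτ').1).1 hch hch'
  · intro z' hz'
    obtain ⟨h1, h2⟩ := Finset.mem_inter.1 hz'
    obtain ⟨τ, ht, hzz'⟩ := mem_blk.1 h2
    have hτS : comp v τ ∈ A.S := hc.htrans τ ht
    have heqv : comp v τ = v :=
      rel_eq_of_mem hτS hc.hv (comp_mem hxz hzz') (mem_nbhdF.1 h1)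
    have hmem : τ ∈ stab A Γ v := Finset.mem_filter.2 ⟨mem_thinsF.2 ht, heqv⟩
    refine ⟨τ, hmem, ?_⟩
    exact ((thin_unique hc.hΓ (mem_thinsF.1 (Finset.mem_filter.1 hmem).1) hzΓ).choose_spec.2
      z' hzz').symm

lemma stab_nonempty : diagRel Γ ∈ stab A Γ v :=
  Finset.mem_filter.2 ⟨mem_thinsF.2 (diag_thin hc.hΓ), comp_diag hc.hsub⟩

/-- orbit–stabilizer: the number of translates times the stabilizer size is `p` -/
lemma orbit_stab :
    ((thinsF A Γ).image fun τ => comp v τ).card * (stab A Γ v).card = p := by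
  have h1 : (thinsF A Γ).card = p := wf_thins hc.hΓ
  have h2 : (thinsF A Γ).card = ∑ w ∈ (thinsF A Γ).image fun τ => comp v τ,
      ((thinsF A Γ).filter fun τ => comp v τ = w).card :=
    Finset.card_eq_sum_card_fiberwise (fun τ hτ => Finset.mem_image_of_mem _ hτ)
  have h3 : ∀ w ∈ (thinsF A Γ).image fun τ => comp v τ,
      ((thinsF A Γ).filter fun τ => comp v τ = w).card = (stab A Γ v).card := by
    intro w hwim
    obtain ⟨τ₀, hτ₀, hw⟩ := Finset.mem_image.1 hwim
    have ht₀ := mem_thinsF.1 hτ₀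
    refine Finset.card_bij (fun τ (hτ : τ ∈ (thinsF A Γ).filter fun τ => comp v τ = w)
        => comp τ (star τ₀)) ?_ ?_ ?_
    · intro τ hτ
      obtain ⟨hτ1, hτ2⟩ := Finset.mem_filter.1 hτ
      have ht := mem_thinsF.1 hτ1
      have hthin : IsThinOn A Γ (comp τ (star τ₀)) :=
        comp_thin_thin hc.hp hc.hΓ ht (thin_star hc.hp hc.hΓ ht₀)
      refine Finset.mem_filter.2 ⟨mem_thinsF.2 hthin, ?_⟩
      show comp v (comp τ (star τ₀)) = v
      rw [← comp_assoc, hτ2, ← hw, comp_assoc, comp_star_self hc.hp hc.hΓ ht₀,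
        comp_diag hc.hsub]
    · intro τ hτ τ' hτ' heq
      have ht := mem_thinsF.1 (Finset.mem_filter.1 hτ).1
      have ht' := mem_thinsF.1 (Finset.mem_filter.1 hτ').1
      have h5 : comp (comp τ (star τ₀)) τ₀ = comp (comp τ' (star τ₀)) τ₀ := by rw [heq]
      rwa [comp_assoc, comp_assoc, comp_star_self' hc.hp hc.hΓ ht₀,
        comp_diag ht.2.1, comp_diag ht'.2.1] at h5
    · intro σ hσ
      obtain ⟨hσ1, hσ2⟩ := Finset.mem_filter.1 hσ
      have hσt := mem_thinsF.1 hσ1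
      refine ⟨comp σ τ₀, Finset.mem_filter.2 ⟨mem_thinsF.2
        (comp_thin_thin hc.hp hc.hΓ hσt ht₀), ?_⟩, ?_⟩
      · rw [← comp_assoc, hσ2, hw]
      · show comp (comp σ τ₀) (star τ₀) = σ
        rw [comp_assoc, comp_star_self hc.hp hc.hΓ ht₀, comp_diag hσt.2.1]
  rw [Finset.sum_congr rfl h3, Finset.sum_const, smul_eq_mul] at h2
  rw [← h2, h1]

lemma stab_card_eq_one_or_p : (stab A Γ v).card = 1 ∨ (stab A Γ v).card = p := by
  have h := orbit_stab hc
  have h2 : (stab A Γ v).card ∣ p := dvd_of_mul_left_eq _ h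
  rcases (Nat.Prime.eq_one_or_self_of_dvd hc.hp _ h2) with h3 | h3
  · left; exact h3
  · right; exact h3

/-- saturation is equivalent to full stabilizer -/
lemma sat_iff : Sat A Γ v ↔ (stab A Γ v).card = p := by
  constructor
  · intro hsat
    have he : stab A Γ v = thinsF A Γ := by
      apply Finset.Subset.antisymm (Finset.filter_subset _ _)
      intro τ hτ
      have ht := mem_thinsF.1 hτ
      refine Finset.mem_filter.2 ⟨hτ, ?_⟩
      obtain ⟨⟨x, z⟩, hxz⟩ := A.nonempty_mem _ hc.hv
      obtain ⟨z', hz', -⟩ := thin_unique hc.hΓ ht (snd_mem_fiber hc.hsub hxz)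
      exact rel_eq_of_mem (hc.htrans τ ht) hc.hv (comp_mem hxz hz')
        (hsat _ _ _ hxz ⟨τ, ht, hz'⟩)
    rw [he]
    exact wf_thins hc.hΓ
  · intro hk x z z' hxz hE
    have h1 := stab_card hc hxz
    rw [hk] at h1
    have hzΓ : z ∈ Γ := snd_mem_fiber hc.hsub hxz
    have h2 : nbhdF v x ∩ blk A Γ z ⊆ blk A Γ z := Finset.inter_subset_right
    have h3 : nbhdF v x ∩ blk A Γ z = blk A Γ z := by
      apply Finset.eq_of_subset_of_card_le h2
      rw [h1, card_blk hc.hΓ hzΓ]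
    have h4 : z' ∈ nbhdF v x ∩ blk A Γ z := by rw [h3]; exact mem_blk.2 hE
    exact mem_nbhdF.1 (Finset.mem_inter.1 h4).1

/-- if saturated, the neighbourhood of a point is exactly a block -/
lemma nbhd_eq_blk (hsat : Sat A Γ v) {x z : Ω} (hxz : (x, z) ∈ v) :
    nbhdF v x = blk A Γ z := by
  have hk := (sat_iff hc).1 hsat
  have h1 := stab_card hc hxz
  rw [hk] at h1
  have hxΔ : x ∈ Δ := fst_mem_fiber hc.hsub hxz
  have hzΓ : z ∈ Γ := snd_mem_fiber hc.hsub hxz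
  have hn : (nbhdF v x).card = p := by rw [card_nbhdF]; exact hc.hdeg x hxΔ
  have hb : (blk A Γ z).card = p := card_blk hc.hΓ hzΓ
  have e1 : nbhdF v x ∩ blk A Γ z = nbhdF v x :=
    Finset.eq_of_subset_of_card_le Finset.inter_subset_left (by rw [h1, hn])
  have e2 : nbhdF v x ∩ blk A Γ z = blk A Γ z :=
    Finset.eq_of_subset_of_card_le Finset.inter_subset_right (by rw [h1, hb])
  rw [← e1, e2]

end Ctx


----------------------------------------------------------------------
-- counting relations inside a fiber
----------------------------------------------------------------------

lemma S_disjoint {s t : Finset (Ω × Ω)} (hs : s ∈ A.S) (ht : t ∈ A.S) (hne : s ≠ t) :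
    Disjoint s t := by
  rw [Finset.disjoint_left]
  intro q hq hq'
  exact hne (rel_eq_of_mem hs ht hq hq')

lemma sum_card_relations {Δ Γ : Finset Ω} (hΔ : IsFiber A Δ) (hΓ : IsFiber A Γ) :
    (Δ ×ˢ Γ).card = ∑ w ∈ A.S.filter (fun w => w ⊆ Δ ×ˢ Γ), w.card := by
  have hmapsto : ∀ q ∈ Δ ×ˢ Γ, relOf A q ∈ A.S.filter (fun w => w ⊆ Δ ×ˢ Γ) := by
    rintro ⟨x, y⟩ hq
    obtain ⟨hx, hy⟩ := Finset.mem_product.1 hq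
    refine Finset.mem_filter.2 ⟨relOf_mem_S A _, ?_⟩
    have := rel_sub (relOf_mem_S A (x, y)) (mem_relOf A (x, y))
    rwa [fib_eq hΔ hx, fib_eq hΓ hy] at this
  rw [Finset.card_eq_sum_card_fiberwise hmapsto]
  refine Finset.sum_congr rfl ?_
  intro w hwIR
  have hw1 := Finset.mem_filter.1 hwIR
  have he : (Δ ×ˢ Γ).filter (fun q => relOf A q = w) = w := by
    ext q
    simp only [Finset.mem_filter]
    constructor
    · rintro ⟨hq1, hq2⟩; rw [← hq2]; exact mem_relOf A q
    · intro hq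
      exact ⟨hw1.2 hq, (eq_relOf hw1.1 hq).symm⟩
  rw [he]

/-- there are exactly `p - 1` non-thin relations inside a wreath fiber -/
lemma card_NT (hp : p.Prime) (hw : WreathFiber p A Δ) :
    (A.S.filter fun w => w ⊆ Δ ×ˢ Δ ∧ ¬ IsThinOn A Δ w).card = p - 1 := by
  set NT := A.S.filter fun w => w ⊆ Δ ×ˢ Δ ∧ ¬ IsThinOn A Δ w with hNT
  have hsplit : A.S.filter (fun w => w ⊆ Δ ×ˢ Δ) = thinsF A Δ ∪ NT := by
    ext w
    simp only [Finset.mem_union, Finset.mem_filter, mem_thinsF, hNT]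
    constructor
    · rintro ⟨h1, h2⟩
      rcases Classical.em (IsThinOn A Δ w) with h | h
      · exact Or.inl h
      · exact Or.inr ⟨h1, h2, h⟩
    · rintro (h | ⟨h1, h2, h3⟩)
      · exact ⟨h.1, h.2.1⟩
      · exact ⟨h1, h2⟩
  have hdisj : Disjoint (thinsF A Δ) NT := by
    rw [Finset.disjoint_left]
    intro w h1 h2
    exact ((Finset.mem_filter.1 h2).2).2 (mem_thinsF.1 h1)
  have hsum := sum_card_relations (wf_isFiber hw) (wf_isFiber hw)
  rw [hsplit, Finset.sum_union hdisj] at hsum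
  have hthinval : ∀ w ∈ thinsF A Δ, w.card = p ^ 2 := by
    intro w hwt
    rw [thin_card hw (mem_thinsF.1 hwt), wf_card hw]
  have hntval : ∀ w ∈ NT, w.card = p ^ 2 * p := by
    intro w hwt
    obtain ⟨hw1, hw2, hw3⟩ := Finset.mem_filter.1 hwt
    have hval : HasValency w p := by
      rcases wf_val hw w hw1 hw2 with h | h
      · exact absurd ⟨hw1, hw2, h⟩ hw3
      · exact h
    rw [card_of_valency hw1 (wf_isFiber hw) hw2 (A.nonempty_mem _ hw1) hval, wf_card hw]
  have hthc : (thinsF A Δ).card = p := wf_thins hw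
  rw [Finset.sum_congr rfl hthinval, Finset.sum_congr rfl hntval, Finset.sum_const,
    Finset.sum_const, smul_eq_mul, smul_eq_mul, hthc] at hsum
  have hcard : (Δ ×ˢ Δ).card = p ^ 2 * p ^ 2 := by
    rw [Finset.card_product, wf_card hw]
  rw [hcard] at hsum
  have h3 : (1 + NT.card) * (p ^ 2 * p) = p * (p ^ 2 * p) := by
    ring_nf
    ring_nf at hsum
    linarith
  have h4 : 1 + NT.card = p := Nat.eq_of_mul_eq_mul_right (by have := hp.pos; positivity) h3
  omega

----------------------------------------------------------------------
-- Ctx constructors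
----------------------------------------------------------------------

lemma ctx_inter (hp : p.Prime) {Δ Γ : Finset Ω} {v : Finset (Ω × Ω)}
    (hΔ : WreathFiber p A Δ) (hΓ : WreathFiber p A Γ)
    (hv : v ∈ A.S) (hsub : v ⊆ Δ ×ˢ Γ)
    (hval : ∀ w ∈ A.S, w ⊆ Δ ×ˢ Γ → HasValency w p) : Ctx A p Δ Γ v := by
  have hdeg : ∀ x ∈ Δ, deg v x = p := fun x hx =>
    exists_deg_eq hv (wf_isFiber hΔ) hsub (A.nonempty_mem _ hv) hx (hval v hv hsub)
  refine ⟨hp, hv, hΔ, hΓ, hsub, ?_, hdeg⟩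
  intro τ ht
  refine comp_rel hp hv (wf_isFiber hΔ) hsub hΓ ht hp.pos hdeg ?_
  intro w hwS hwsub hwne x hx
  have hsub2 : w ⊆ Δ ×ˢ Γ := hwsub.trans (comp_subset hsub ht.2.1)
  exact exists_deg_eq hwS (wf_isFiber hΔ) hsub2 hwne hx (hval w hwS hsub2)

lemma ctx_intra (hp : p.Prime) {Δ : Finset Ω} {v : Finset (Ω × Ω)}
    (hΔ : WreathFiber p A Δ) (hv : v ∈ A.S) (hsub : v ⊆ Δ ×ˢ Δ)
    (hnt : ¬ IsThinOn A Δ v) : Ctx A p Δ Δ v := by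
  have hval : HasValency v p := by
    rcases wf_val hΔ v hv hsub with h | h
    · exact absurd ⟨hv, hsub, h⟩ hnt
    · exact h
  have hdeg : ∀ x ∈ Δ, deg v x = p := fun x hx =>
    exists_deg_eq hv (wf_isFiber hΔ) hsub (A.nonempty_mem _ hv) hx hval
  refine ⟨hp, hv, hΔ, hΔ, hsub, ?_, hdeg⟩
  intro τ ht
  refine comp_rel hp hv (wf_isFiber hΔ) hsub hΔ ht hp.pos hdeg ?_
  intro w hwS hwsub hwne x hx
  have hsub2 : w ⊆ Δ ×ˢ Δ := hwsub.trans (comp_subset hsub ht.2.1)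
  rcases wf_val hΔ w hwS hsub2 with h | h
  · exfalso
    obtain ⟨⟨x₁, z₁⟩, h₁⟩ := hwne
    obtain ⟨y₁, hy₁, hy₂⟩ := mem_comp.1 (hwsub h₁)
    have hcz : A.c w (star τ) v ≠ 0 :=
      c_ne_zero hwS (star_mem_S ht.1) hv h₁ (mem_star.2 hy₂) hy₁
    exact hnt (wf_closed hΔ w τ v ⟨hwS, hsub2, h⟩ ht hv hcz)
  · exact exists_deg_eq hwS (wf_isFiber hΔ) hsub2 hwne hx h

lemma intra_translate_nonthin (hp : p.Prime) {Δ : Finset Ω} {v τ : Finset (Ω × Ω)}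
    (hΔ : WreathFiber p A Δ) (hv : v ∈ A.S) (hsub : v ⊆ Δ ×ˢ Δ)
    (hnt : ¬ IsThinOn A Δ v) (ht : IsThinOn A Δ τ) : ¬ IsThinOn A Δ (comp v τ) := by
  intro hthin
  obtain ⟨⟨x, z⟩, hxz⟩ := A.nonempty_mem _ hv
  obtain ⟨z', hz', -⟩ := thin_unique hΔ ht (snd_mem_fiber hsub hxz)
  have hmem : (x, z') ∈ comp v τ := comp_mem hxz hz'
  have h1 : deg (comp v τ) x = 1 := deg_of_valency hthin.2.2 hmem
  have hc := ctx_intra hp hΔ hv hsub hnt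
  have h2 : deg (comp v τ) x = p := by
    rw [deg_comp_thin hΔ ht hp hsub]
    exact hc.hdeg x (fst_mem_fiber hsub hxz)
  have := hp.two_le
  omega

/-- every non-thin relation inside a wreath fiber is block-saturated -/
lemma intra_sat (hp : p.Prime) {Δ : Finset Ω} {v : Finset (Ω × Ω)}
    (hΔ : WreathFiber p A Δ) (hv : v ∈ A.S) (hsub : v ⊆ Δ ×ˢ Δ)
    (hnt : ¬ IsThinOn A Δ v) : Sat A Δ v := by
  have hc := ctx_intra hp hΔ hv hsub hnt
  rcases hc.stab_card_eq_one_or_p with h1 | h1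
  · exfalso
    have horb := hc.orbit_stab
    rw [h1, mul_one] at horb
    have himsub : ((thinsF A Δ).image fun τ => comp v τ) ⊆
        A.S.filter fun w => w ⊆ Δ ×ˢ Δ ∧ ¬ IsThinOn A Δ w := by
      intro w hwim
      obtain ⟨τ, hτ, rfl⟩ := Finset.mem_image.1 hwim
      have ht := mem_thinsF.1 hτ
      exact Finset.mem_filter.2 ⟨hc.htrans τ ht, comp_subset hsub ht.2.1,
        intra_translate_nonthin hp hΔ hv hsub hnt ht⟩
    have := Finset.card_le_card himsub
    rw [horb, card_NT hp hΔ] at this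
    have := hp.two_le
    omega
  · exact (hc.sat_iff).2 h1

----------------------------------------------------------------------
-- covering by translates in the unsaturated case
----------------------------------------------------------------------

namespace Ctx

variable {Δ Γ : Finset Ω} {v : Finset (Ω × Ω)} (hc : Ctx A p Δ Γ v)

include hc

lemma card_translate {τ : Finset (Ω × Ω)} (ht : IsThinOn A Γ τ) :
    (comp v τ).card = p ^ 2 * p := by
  have hsub2 : comp v τ ⊆ Δ ×ˢ Γ := comp_subset hc.hsub ht.2.1
  rw [card_eq_sum_deg hsub2]
  rw [Finset.sum_congr rfl (fun x hx => ?_), Finset.sum_const, smul_eq_mul, wf_card hc.hΔ]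
  rw [deg_comp_thin hc.hΓ ht hc.hp hc.hsub]
  exact hc.hdeg x hx

lemma nonsat_union (hns : ¬ Sat A Γ v) :
    ((thinsF A Γ).image fun τ => comp v τ).biUnion id = Δ ×ˢ Γ := by
  have hk : (stab A Γ v).card = 1 := by
    rcases hc.stab_card_eq_one_or_p with h | h
    · exact h
    · exact absurd ((hc.sat_iff).2 h) hns
  have horb := hc.orbit_stab
  rw [hk, mul_one] at horb
  apply Finset.eq_of_subset_of_card_le
  · intro q hq
    obtain ⟨w, hwim, hqw⟩ := Finset.mem_biUnion.1 hq
    obtain ⟨τ, hτ, rfl⟩ := Finset.mem_image.1 hwim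
    exact comp_subset hc.hsub (mem_thinsF.1 hτ).2.1 hqw
  · have hdisjoint : ∀ w₁ ∈ (thinsF A Γ).image fun τ => comp v τ,
        ∀ w₂ ∈ (thinsF A Γ).image fun τ => comp v τ, w₁ ≠ w₂ → Disjoint (id w₁) (id w₂) := by
      intro w₁ h₁ w₂ h₂ hne
      obtain ⟨τ₁, hτ₁, rfl⟩ := Finset.mem_image.1 h₁
      obtain ⟨τ₂, hτ₂, rfl⟩ := Finset.mem_image.1 h₂
      exact S_disjoint (hc.htrans τ₁ (mem_thinsF.1 hτ₁)) (hc.htrans τ₂ (mem_thinsF.1 hτ₂)) hne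
    rw [Finset.card_biUnion hdisjoint]
    have hval : ∀ w ∈ (thinsF A Γ).image fun τ => comp v τ, (id w).card = p ^ 2 * p := by
      intro w hwim
      obtain ⟨τ, hτ, rfl⟩ := Finset.mem_image.1 hwim
      exact card_translate hc (mem_thinsF.1 hτ)
    rw [Finset.sum_congr rfl hval, Finset.sum_const, smul_eq_mul, horb,
      Finset.card_product, wf_card hc.hΔ, wf_card hc.hΓ]
    ring_nf
    exact le_of_eq (by ring)

/-- in the unsaturated case every relation between the two fibers is a translate -/
lemma nonsat_translate (hns : ¬ Sat A Γ v) {w : Finset (Ω × Ω)} (hw : w ∈ A.S)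
    (hwsub : w ⊆ Δ ×ˢ Γ) : ∃ τ, IsThinOn A Γ τ ∧ w = comp v τ := by
  obtain ⟨⟨x, z⟩, hxz⟩ := A.nonempty_mem _ hw
  have hq : (x, z) ∈ ((thinsF A Γ).image fun τ => comp v τ).biUnion id := by
    rw [nonsat_union hc hns]
    exact hwsub hxz
  obtain ⟨w', hwim, hqw⟩ := Finset.mem_biUnion.1 hq
  obtain ⟨τ, hτ, rfl⟩ := Finset.mem_image.1 hwim
  have ht := mem_thinsF.1 hτ
  exact ⟨τ, ht, rel_eq_of_mem hw (hc.htrans τ ht) hxz hqw⟩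

/-- in the unsaturated case every neighbourhood meets every block -/
lemma nonsat_cover (hns : ¬ Sat A Γ v) {x z : Ω} (hx : x ∈ Δ) (hz : z ∈ Γ) :
    ∃ z', (x, z') ∈ v ∧ ERel A Γ z z' := by
  have hq : (x, z) ∈ ((thinsF A Γ).image fun τ => comp v τ).biUnion id := by
    rw [nonsat_union hc hns]
    exact Finset.mem_product.2 ⟨hx, hz⟩
  obtain ⟨w', hwim, hqw⟩ := Finset.mem_biUnion.1 hq
  obtain ⟨τ, hτ, rfl⟩ := Finset.mem_image.1 hwim
  obtain ⟨z', hz', hz'2⟩ := mem_comp.1 hqw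
  exact ⟨z', hz', ERel.symm hc.hp hc.hΓ ⟨τ, mem_thinsF.1 hτ, hz'2⟩⟩

/-- saturation transfers back along a translate -/
lemma sat_of_translate {τ : Finset (Ω × Ω)} (ht : IsThinOn A Γ τ)
    (hsat : Sat A Γ (comp v τ)) : Sat A Γ v := by
  intro x z z' hxz hE
  have hzΓ : z ∈ Γ := snd_mem_fiber hc.hsub hxz
  have hz'Γ : z' ∈ Γ := hE.mem_right
  obtain ⟨w, hw, -⟩ := thin_unique hc.hΓ ht hzΓ
  obtain ⟨w', hw', -⟩ := thin_unique hc.hΓ ht hz'Γ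
  have h1 : (x, w) ∈ comp v τ := comp_mem hxz hw
  have hww' : ERel A Γ w w' := by
    have e1 : ERel A Γ z w := ⟨τ, ht, hw⟩
    have e2 : ERel A Γ z' w' := ⟨τ, ht, hw'⟩
    exact ERel.trans hc.hp hc.hΓ (ERel.trans hc.hp hc.hΓ (ERel.symm hc.hp hc.hΓ e1) hE) e2
  have h2 : (x, w') ∈ comp v τ := hsat _ _ _ h1 hww'
  obtain ⟨z₂, hz₂, hz₂'⟩ := mem_comp.1 h2
  have : z₂ = z' := thin_inj hc.hp hc.hΓ ht hz₂' hw'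
  rwa [this] at hz₂

/-- dichotomy: if `v` is unsaturated, no relation between the two fibers is saturated -/
lemma nonsat_all (hns : ¬ Sat A Γ v) {w : Finset (Ω × Ω)} (hw : w ∈ A.S)
    (hwsub : w ⊆ Δ ×ˢ Γ) (hsatw : Sat A Γ w) : False := by
  obtain ⟨τ, ht, rfl⟩ := nonsat_translate hc hns hw hwsub
  exact hns (sat_of_translate hc ht hsatw)

end Ctx


----------------------------------------------------------------------
-- transposition preserves saturation
----------------------------------------------------------------------

lemma two_le_card {α : Type*} [DecidableEq α] {s : Finset α} {a b : α} (ha : a ∈ s)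
    (hb : b ∈ s) (hne : a ≠ b) : 2 ≤ s.card :=
  Finset.one_lt_card.2 ⟨a, ha, b, hb, fun h => hne h⟩

lemma sat_star {Δ Γ : Finset Ω} {v : Finset (Ω × Ω)} (hc : Ctx A p Δ Γ v)
    (hc' : Ctx A p Γ Δ (star v)) (hsat : Sat A Γ v) : Sat A Δ (star v) := by
  rcases hc'.stab_card_eq_one_or_p with hk | hk
  swap
  · exact (hc'.sat_iff).2 hk
  exfalso
  obtain ⟨⟨x, z⟩, hxz⟩ := A.nonempty_mem _ hc.hv
  have hxΔ : x ∈ Δ := fst_mem_fiber hc.hsub hxz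
  have hzΓ : z ∈ Γ := snd_mem_fiber hc.hsub hxz
  have hzx : (z, x) ∈ star v := mem_star.2 hxz
  have hdz : deg (star v) z = p := hc'.hdeg z hzΓ
  have hcard2 : 1 < (nbhdF (star v) z).card := by
    rw [card_nbhdF, hdz]
    exact hc.hp.one_lt
  obtain ⟨xh, hxhmem, hxhne⟩ := Finset.exists_mem_ne hcard2 x
  have hxh : (z, xh) ∈ star v := mem_nbhdF.1 hxhmem
  have hxhΔ : xh ∈ Δ := snd_mem_fiber hc'.hsub hxh
  rcases Classical.em (ERel A Δ x xh) with hE | hE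
  · -- two elements of the same block in the neighbourhood: contradicts k = 1
    have h1 := hc'.stab_card hzx
    rw [hk] at h1
    have hxm : x ∈ nbhdF (star v) z ∩ blk A Δ x :=
      Finset.mem_inter.2 ⟨mem_nbhdF.2 hzx, mem_blk.2 (ERel.refl hc.hΔ hxΔ)⟩
    have hxhm : xh ∈ nbhdF (star v) z ∩ blk A Δ x :=
      Finset.mem_inter.2 ⟨hxhmem, mem_blk.2 hE⟩
    have := two_le_card hxm hxhm (fun h => hxhne h.symm)
    omega
  · -- the relation of (x, xh) is non-thin; use its saturation
    set r := relOf A (x, xh) with hr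
    have hrS : r ∈ A.S := relOf_mem_S A _
    have hrsub : r ⊆ Δ ×ˢ Δ := by
      have := rel_sub hrS (mem_relOf A (x, xh))
      rwa [fib_eq (wf_isFiber hc.hΔ) hxΔ, fib_eq (wf_isFiber hc.hΔ) hxhΔ] at this
    have hrnt : ¬ IsThinOn A Δ r := by
      intro h
      exact hE ⟨r, h, mem_relOf A _⟩
    have hrsat : Sat A Δ r := intra_sat hc.hp hc.hΔ hrS hrsub hrnt
    -- pick x₁ in the block of xh, different from xh
    have hblk2 : 1 < (blk A Δ xh).card := by
      rw [card_blk hc.hΔ hxhΔ]; exact hc.hp.one_lt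
    obtain ⟨x₁, hx₁mem, hx₁ne⟩ := Finset.exists_mem_ne hblk2 xh
    have hxx₁ : (x, x₁) ∈ r := hrsat _ _ _ (mem_relOf A _) (mem_blk.1 hx₁mem)
    -- common neighbour of x and x₁
    obtain ⟨z₁, hz₁, hz₁'⟩ := mid hc.hv (star_mem_S hc.hv) hrS hxz hxh (mem_relOf A (x, xh)) hxx₁
    -- z₁ is in the block of z
    have hz₁blk : ERel A Γ z z₁ := by
      have := hc.nbhd_eq_blk hsat hxz
      exact mem_blk.1 (this ▸ mem_nbhdF.2 hz₁)
    -- xh is also a neighbour of z₁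
    have hxhz₁ : (z₁, xh) ∈ star v := by
      apply mem_star.2
      exact hsat _ _ _ (mem_star.1 hxh) hz₁blk
    -- contradiction with k = 1 at the pair (z₁, xh)
    have h1 := hc'.stab_card hxhz₁
    rw [hk] at h1
    have hm1 : xh ∈ nbhdF (star v) z₁ ∩ blk A Δ xh :=
      Finset.mem_inter.2 ⟨mem_nbhdF.2 hxhz₁, mem_blk.2 (ERel.refl hc.hΔ hxhΔ)⟩
    have hm2 : x₁ ∈ nbhdF (star v) z₁ ∩ blk A Δ xh :=
      Finset.mem_inter.2 ⟨mem_nbhdF.2 hz₁', hx₁mem⟩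
    have := two_le_card hm1 hm2 (fun h => hx₁ne h.symm)
    omega


----------------------------------------------------------------------
-- Regular ↔ saturation
----------------------------------------------------------------------

lemma mem_cprod {T U : Finset (Finset (Ω × Ω))} {u : Finset (Ω × Ω)} :
    u ∈ cprod A T U ↔ u ∈ A.S ∧ ∃ t ∈ T, ∃ w ∈ U, A.c t w u ≠ 0 := Finset.mem_filter

lemma sat_regular {Δ Γ : Finset Ω} {v : Finset (Ω × Ω)} (hc : Ctx A p Δ Γ v)
    (hc' : Ctx A p Γ Δ (star v)) (hsat : Sat A Γ v) : Regular A v := by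
  have hsat' : Sat A Δ (star v) := sat_star hc hc' hsat
  unfold Regular
  ext u
  simp only [Finset.mem_singleton]
  constructor
  · intro hu
    obtain ⟨huS, t, htP1, w, hwmem, hcnz⟩ := mem_cprod.1 hu
    rw [Finset.mem_singleton] at hwmem
    rw [hwmem] at hcnz
    obtain ⟨htS, a, hamem, b, hbmem, hcnz1⟩ := mem_cprod.1 htP1
    rw [Finset.mem_singleton] at hamem hbmem
    rw [hamem, hbmem] at hcnz1
    -- t is thin
    have htthin : IsThinOn A Δ t := by
      obtain ⟨⟨a, b⟩, hab⟩ := A.nonempty_mem _ htS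
      obtain ⟨y, hy1, hy2⟩ := exists_mid hc.hv (star_mem_S hc.hv) htS hcnz1 hab
      have hby : (b, y) ∈ v := mem_star.1 hy2
      have hnb := hc'.nbhd_eq_blk hsat' (mem_star.2 hy1)
      have hbblk : b ∈ blk A Δ a := by
        rw [← hnb]
        exact mem_nbhdF.2 (mem_star.2 hby)
      exact rel_thin_of_E htS hab (mem_blk.1 hbblk)
    -- every element of t ∘ v lies in v
    obtain ⟨⟨x, z⟩, hxzu⟩ := A.nonempty_mem _ huS
    obtain ⟨y, hy1, hy2⟩ := exists_mid htS hc.hv huS hcnz hxzu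
    have hExy : ERel A Δ x y := ⟨t, htthin, hy1⟩
    have hnb := hc'.nbhd_eq_blk hsat' (mem_star.2 hy2)
    have hxblk : x ∈ blk A Δ y := mem_blk.2 (ERel.symm hc.hp hc.hΔ hExy)
    have hxz : (x, z) ∈ v := by
      rw [← hnb] at hxblk
      exact mem_star.1 (mem_nbhdF.1 hxblk)
    exact rel_eq_of_mem huS hc.hv hxzu hxz
  · intro hueq
    rw [hueq]
    obtain ⟨⟨x, z⟩, hxz⟩ := A.nonempty_mem _ hc.hv
    have hxΔ : x ∈ Δ := fst_mem_fiber hc.hsub hxz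
    have hdmem : (x, x) ∈ diagRel Δ := mem_diagRel.2 ⟨hxΔ, rfl⟩
    have hdS : diagRel Δ ∈ A.S := wf_isFiber hc.hΔ
    refine mem_cprod.2 ⟨hc.hv, diagRel Δ, ?_, v, Finset.mem_singleton_self v, ?_⟩
    · refine mem_cprod.2 ⟨hdS, v, Finset.mem_singleton_self v, star v,
        Finset.mem_singleton_self _, ?_⟩
      exact c_ne_zero hc.hv (star_mem_S hc.hv) hdS hxz (mem_star.2 hxz) hdmem
    · exact c_ne_zero hdS hc.hv hc.hv hdmem hxz hxz

lemma nonsat_nonregular {Δ Γ : Finset Ω} {v : Finset (Ω × Ω)} (hc : Ctx A p Δ Γ v)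
    (hc' : Ctx A p Γ Δ (star v)) (hns : ¬ Sat A Γ v) : ¬ Regular A v := by
  -- first produce witnesses of non-commuting neighbourhoods
  have hwit : ∃ x x' z₀ z', (x, z₀) ∈ v ∧ (x', z₀) ∈ v ∧ (x', z') ∈ v ∧ (x, z') ∉ v := by
    by_contra hcom
    push_neg at hcom
    -- derive saturation of star v, hence of v
    have hsat' : Sat A Δ (star v) := by
      rcases hc'.stab_card_eq_one_or_p with hk | hk
      swap
      · exact (hc'.sat_iff).2 hk
      exfalso
      obtain ⟨⟨x, z⟩, hxz⟩ := A.nonempty_mem _ hc.hv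
      have hxΔ : x ∈ Δ := fst_mem_fiber hc.hsub hxz
      have hzΓ : z ∈ Γ := snd_mem_fiber hc.hsub hxz
      have hzx : (z, x) ∈ star v := mem_star.2 hxz
      have hcard2 : 1 < (nbhdF (star v) z).card := by
        rw [card_nbhdF, hc'.hdeg z hzΓ]
        exact hc.hp.one_lt
      obtain ⟨xh, hxhmem, hxhne⟩ := Finset.exists_mem_ne hcard2 x
      have hxh : (z, xh) ∈ star v := mem_nbhdF.1 hxhmem
      have hxhΔ : xh ∈ Δ := snd_mem_fiber hc'.hsub hxh
      rcases Classical.em (ERel A Δ x xh) with hE | hE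
      · have h1 := hc'.stab_card hzx
        rw [hk] at h1
        have hxm : x ∈ nbhdF (star v) z ∩ blk A Δ x :=
          Finset.mem_inter.2 ⟨mem_nbhdF.2 hzx, mem_blk.2 (ERel.refl hc.hΔ hxΔ)⟩
        have hxhm : xh ∈ nbhdF (star v) z ∩ blk A Δ x :=
          Finset.mem_inter.2 ⟨hxhmem, mem_blk.2 hE⟩
        have := two_le_card hxm hxhm (fun h => hxhne h.symm)
        omega
      · set r := relOf A (x, xh) with hr
        have hrS : r ∈ A.S := relOf_mem_S A _
        have hrsub : r ⊆ Δ ×ˢ Δ := by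
          have := rel_sub hrS (mem_relOf A (x, xh))
          rwa [fib_eq (wf_isFiber hc.hΔ) hxΔ, fib_eq (wf_isFiber hc.hΔ) hxhΔ] at this
        have hrnt : ¬ IsThinOn A Δ r := fun h => hE ⟨r, h, mem_relOf A _⟩
        have hrsat : Sat A Δ r := intra_sat hc.hp hc.hΔ hrS hrsub hrnt
        have hblk2 : 1 < (blk A Δ xh).card := by
          rw [card_blk hc.hΔ hxhΔ]; exact hc.hp.one_lt
        obtain ⟨x₁, hx₁mem, hx₁ne⟩ := Finset.exists_mem_ne hblk2 xh
        have hxx₁ : (x, x₁) ∈ r := hrsat _ _ _ (mem_relOf A _) (mem_blk.1 hx₁mem)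
        obtain ⟨z₁, hz₁, hz₁'⟩ :=
          mid hc.hv (star_mem_S hc.hv) hrS hxz hxh (mem_relOf A (x, xh)) hxx₁
        have hx₁z₁ : (x₁, z₁) ∈ v := mem_star.1 hz₁'
        -- use hcom to see that xh is also a neighbour of z₁
        have hxhz₁ : (xh, z₁) ∈ v := hcom xh x z z₁ (mem_star.1 hxh) hxz hz₁
        have h1 := hc'.stab_card (mem_star.2 hxhz₁)
        rw [hk] at h1
        have hm1 : xh ∈ nbhdF (star v) z₁ ∩ blk A Δ xh :=
          Finset.mem_inter.2 ⟨mem_nbhdF.2 (mem_star.2 hxhz₁),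
            mem_blk.2 (ERel.refl hc.hΔ hxhΔ)⟩
        have hm2 : x₁ ∈ nbhdF (star v) z₁ ∩ blk A Δ xh :=
          Finset.mem_inter.2 ⟨mem_nbhdF.2 hz₁', hx₁mem⟩
        have := two_le_card hm1 hm2 (fun h => hx₁ne h.symm)
        omega
    -- transfer back to v
    have hcss : Ctx A p Δ Γ (star (star v)) := by rwa [star_star]
    have hsatv : Sat A Γ (star (star v)) := sat_star hc' hcss hsat'
    rw [star_star] at hsatv
    exact hns hsatv
  obtain ⟨x, x', z₀, z', h1, h2, h3, h4⟩ := hwit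
  intro hreg
  set t₁ := relOf A (x, x') with ht₁def
  set w := relOf A (x, z') with hwdef
  have ht₁P1 : t₁ ∈ cprod A {v} {star v} := by
    refine mem_cprod.2 ⟨relOf_mem_S A _, v, Finset.mem_singleton_self v, star v,
      Finset.mem_singleton_self _, ?_⟩
    exact c_ne_zero hc.hv (star_mem_S hc.hv) (relOf_mem_S A _) h1 (mem_star.2 h2)
      (mem_relOf A _)
  have hwP2 : w ∈ cprod A (cprod A {v} {star v}) {v} := by
    refine mem_cprod.2 ⟨relOf_mem_S A _, t₁, ht₁P1, v, Finset.mem_singleton_self v, ?_⟩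
    exact c_ne_zero (relOf_mem_S A _) hc.hv (relOf_mem_S A _) (mem_relOf A (x, x')) h3
      (mem_relOf A _)
  rw [hreg, Finset.mem_singleton] at hwP2
  apply h4
  rw [← hwP2]
  exact mem_relOf A _


----------------------------------------------------------------------
-- uniqueness of middle points (the key counting argument)
----------------------------------------------------------------------

lemma nonsat_star {Δ Γ : Finset Ω} {v : Finset (Ω × Ω)} (hc : Ctx A p Δ Γ v)
    (hc' : Ctx A p Γ Δ (star v)) (hns : ¬ Sat A Γ v) : ¬ Sat A Δ (star v) := by
  intro hsat'
  have hcss : Ctx A p Δ Γ (star (star v)) := by rwa [star_star]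
  have h := sat_star hc' hcss hsat'
  rw [star_star] at h
  exact hns h

lemma stab_one_of_nonsat {Δ Γ : Finset Ω} {v : Finset (Ω × Ω)} (hc : Ctx A p Δ Γ v)
    (hns : ¬ Sat A Γ v) : (stab A Γ v).card = 1 := by
  rcases hc.stab_card_eq_one_or_p with h | h
  · exact h
  · exact absurd ((hc.sat_iff).2 h) hns

lemma middle_unique {Δ Γ Λ : Finset Ω} {s t v : Finset (Ω × Ω)}
    (ctxS : Ctx A p Δ Γ s) (ctxT : Ctx A p Γ Λ t) (hnsT : ¬ Sat A Λ t)
    (ctxV : Ctx A p Δ Λ v) (hsatV : Sat A Λ v)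
    {a g b1 b2 : Ω} (hag : (a, g) ∈ v) (h1 : (a, b1) ∈ s) (h2 : (b1, g) ∈ t)
    (h3 : (a, b2) ∈ s) (h4 : (b2, g) ∈ t) : b1 = b2 := by
  by_contra hne
  have hp2 := ctxS.hp.two_le
  have haΔ : a ∈ Δ := fst_mem_fiber ctxV.hsub hag
  have hgΛ : g ∈ Λ := snd_mem_fiber ctxV.hsub hag
  have hkT : (stab A Λ t).card = 1 := stab_one_of_nonsat ctxT hnsT
  set c := A.c s t v with hcdef
  -- c ≥ 2
  have hc2 : 2 ≤ c := by
    have hsp := A.c_spec s ctxS.hv t ctxT.hv v ctxV.hv (a, g) hag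
    rw [hcdef, ← hsp]
    apply two_le_card (b := b1) (a := b2)
    · exact Finset.mem_filter.2 ⟨Finset.mem_univ _, h3, h4⟩
    · exact Finset.mem_filter.2 ⟨Finset.mem_univ _, h1, h2⟩
    · exact fun h => hne h.symm
  -- the double counting set
  set N := ((nbhdF s a) ×ˢ (blk A Λ g)).filter (fun q => q ∈ t) with hNdef
  -- first count: N.card = p * c
  have hcount1 : N.card = p * c := by
    rw [Finset.card_eq_sum_card_fiberwise (f := Prod.snd) (t := blk A Λ g) ?_]
    · rw [Finset.sum_congr rfl (g := fun _ => c) ?_, Finset.sum_const, smul_eq_mul,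
        card_blk ctxV.hΓ hgΛ]
      intro g' hg'
      have hgE : ERel A Λ g g' := mem_blk.1 hg'
      have hag' : (a, g') ∈ v := hsatV _ _ _ hag hgE
      have hsp := A.c_spec s ctxS.hv t ctxT.hv v ctxV.hv (a, g') hag'
      rw [hcdef, ← hsp]
      refine Finset.card_bij (fun q (hq : q ∈ N.filter fun q => q.2 = g') => q.1) ?_ ?_ ?_
      · rintro ⟨b', g''⟩ hq
        obtain ⟨hq1, hq2⟩ := Finset.mem_filter.1 hq
        simp only at hq2
        subst hq2
        obtain ⟨hq3, hq4⟩ := Finset.mem_filter.1 hq1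
        obtain ⟨hq5, hq6⟩ := Finset.mem_product.1 hq3
        exact Finset.mem_filter.2 ⟨Finset.mem_univ _, mem_nbhdF.1 hq5, hq4⟩
      · rintro ⟨b', g''⟩ hq ⟨b''', g''''⟩ hq' heq
        simp only at heq
        obtain ⟨hq1, hq2⟩ := Finset.mem_filter.1 hq
        obtain ⟨hq1', hq2'⟩ := Finset.mem_filter.1 hq'
        simp only at hq2 hq2'
        subst hq2; subst hq2'; subst heq; rfl
      · intro b' hb'
        obtain ⟨-, hb1, hb2⟩ := Finset.mem_filter.1 hb'
        refine ⟨(b', g'), Finset.mem_filter.2 ⟨Finset.mem_filter.2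
          ⟨Finset.mem_product.2 ⟨mem_nbhdF.2 hb1, hg'⟩, hb2⟩, rfl⟩, rfl⟩
    · intro q hq
      obtain ⟨hq1, -⟩ := Finset.mem_filter.1 hq
      exact (Finset.mem_product.1 hq1).2
  -- second count: N.card ≤ p
  have hcount2 : N.card ≤ p := by
    rw [Finset.card_eq_sum_card_fiberwise (f := Prod.fst) (t := nbhdF s a) ?_]
    · calc ∑ b' ∈ nbhdF s a, (N.filter fun q => q.1 = b').card
          ≤ ∑ b' ∈ nbhdF s a, 1 := by
            apply Finset.sum_le_sum
            intro b' hb'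
            apply Finset.card_le_one.2
            rintro ⟨b2', g1⟩ hq1 ⟨b3', g2⟩ hq2
            obtain ⟨hqa, hqb⟩ := Finset.mem_filter.1 hq1
            obtain ⟨hqc, hqd⟩ := Finset.mem_filter.1 hq2
            simp only at hqb hqd
            have hfst : b2' = b3' := hqb.trans hqd.symm
            obtain ⟨hqe, hqf⟩ := Finset.mem_filter.1 hqa
            obtain ⟨hqg, hqh⟩ := Finset.mem_filter.1 hqc
            obtain ⟨-, hg1blk⟩ := Finset.mem_product.1 hqe
            obtain ⟨-, hg2blk⟩ := Finset.mem_product.1 hqg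
            rw [← hfst] at hqh
            -- g1 = g2 using k(t) = 1
            have hE12 : ERel A Λ g1 g2 :=
              ERel.trans ctxT.hp ctxT.hΓ
                (ERel.symm ctxT.hp ctxT.hΓ (mem_blk.1 hg1blk)) (mem_blk.1 hg2blk)
            have hstab := ctxT.stab_card hqf
            rw [hkT] at hstab
            have hm1 : g1 ∈ nbhdF t b2' ∩ blk A Λ g1 :=
              Finset.mem_inter.2 ⟨mem_nbhdF.2 hqf,
                mem_blk.2 (ERel.refl ctxT.hΓ (snd_mem_fiber ctxT.hsub hqf))⟩
            have hm2 : g2 ∈ nbhdF t b2' ∩ blk A Λ g1 :=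
              Finset.mem_inter.2 ⟨mem_nbhdF.2 hqh, mem_blk.2 hE12⟩
            have hg1g2 : g1 = g2 := by
              by_contra hgne
              have := two_le_card hm1 hm2 hgne
              omega
            rw [Prod.mk.injEq]
            exact ⟨hfst, hg1g2⟩
        _ = (nbhdF s a).card := by rw [Finset.sum_const, smul_eq_mul, mul_one]
        _ = p := by rw [card_nbhdF]; exact ctxS.hdeg a haΔ
    · intro q hq
      obtain ⟨hq1, -⟩ := Finset.mem_filter.1 hq
      exact (Finset.mem_product.1 hq1).1
  rw [hcount1] at hcount2
  nlinarith


----------------------------------------------------------------------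
-- the three transitivity cases
----------------------------------------------------------------------

/-- a saturated-neighbourhood criterion -/
lemma sat_of_nbhd_sub {Γ Λ : Finset Ω} {t : Finset (Ω × Ω)} (ctxT : Ctx A p Γ Λ t)
    (h : ∀ b g1, (b, g1) ∈ t → nbhdF t b ⊆ blk A Λ g1) : Sat A Λ t := by
  intro b g1 g1' hmem hE
  have hsub := h b g1 hmem
  have hcard : (nbhdF t b).card = p := by
    rw [card_nbhdF]; exact ctxT.hdeg b (fst_mem_fiber ctxT.hsub hmem)
  have hblk : (blk A Λ g1).card = p := card_blk ctxT.hΓ (snd_mem_fiber ctxT.hsub hmem)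
  have heq : nbhdF t b = blk A Λ g1 :=
    Finset.eq_of_subset_of_card_le hsub (by rw [hcard, hblk])
  have : g1' ∈ nbhdF t b := by rw [heq]; exact mem_blk.2 hE
  exact mem_nbhdF.1 this

/-- case: s is a relation inside the fiber `Δ`, t goes from `Δ` to `Λ` -/
lemma trans_case_a {Δ Λ : Finset Ω} {s t u : Finset (Ω × Ω)} (hp : p.Prime)
    (hΔw : WreathFiber p A Δ)
    (hsS : s ∈ A.S) (hssub : s ⊆ Δ ×ˢ Δ)
    (ctxT : Ctx A p Δ Λ t) (hnsT : ¬ Sat A Λ t)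
    (ctxU : Ctx A p Δ Λ u) (ctxU' : Ctx A p Λ Δ (star u))
    {α β γ : Ω} (hab : (α, β) ∈ s) (hbg : (β, γ) ∈ t) (hag : (α, γ) ∈ u) :
    ¬ Sat A Λ u := by
  intro hSatU
  have hSatU' : Sat A Δ (star u) := sat_star ctxU ctxU' hSatU
  have hsS' : star s ∈ A.S := star_mem_S hsS
  have hcnz : A.c (star s) u t ≠ 0 :=
    c_ne_zero hsS' ctxU.hv ctxT.hv (mem_star.2 hab) hag hbg
  apply hnsT
  apply sat_of_nbhd_sub ctxT
  intro b g1 hmem g2 hg2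
  have hg2' : (b, g2) ∈ t := mem_nbhdF.1 hg2
  obtain ⟨a1, ha1, ha1'⟩ := exists_mid hsS' ctxU.hv ctxT.hv hcnz hmem
  obtain ⟨a2, ha2, ha2'⟩ := exists_mid hsS' ctxU.hv ctxT.hv hcnz hg2'
  have hbΔ : b ∈ Δ := fst_mem_fiber ctxT.hsub hmem
  -- a1 and a2 are in the same block
  have hE12 : ERel A Δ a1 a2 := by
    rcases Classical.em (IsThinOn A Δ (star s)) with hthin | hnthin
    · exact ERel.trans hp hΔw (ERel.symm hp hΔw ⟨star s, hthin, ha1⟩) ⟨star s, hthin, ha2⟩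
    · have ctxSS := ctx_intra hp hΔw hsS' (star_subset hssub) hnthin
      have hsatSS := intra_sat hp hΔw hsS' (star_subset hssub) hnthin
      have := ctxSS.nbhd_eq_blk hsatSS ha1
      exact mem_blk.1 (by rw [← this]; exact mem_nbhdF.2 ha2)
  -- g1 is also a neighbour of a2
  have hg1a2 : (a2, g1) ∈ u := mem_star.1 (hSatU' _ _ _ (mem_star.2 ha1') hE12)
  -- hence g2 is in the block of g1
  have := ctxU.nbhd_eq_blk hSatU hg1a2
  exact (by rw [← this]; exact mem_nbhdF.2 ha2' : g2 ∈ blk A Λ g1)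

/-- case: t is a relation inside the fiber `Λ`, s goes from `Δ` to `Λ` -/
lemma trans_case_b {Δ Λ : Finset Ω} {s t u : Finset (Ω × Ω)} (hp : p.Prime)
    (hΛw : WreathFiber p A Λ)
    (ctxS : Ctx A p Δ Λ s) (hnsS : ¬ Sat A Λ s)
    (htS : t ∈ A.S) (htsub : t ⊆ Λ ×ˢ Λ)
    (ctxU : Ctx A p Δ Λ u)
    {α β γ : Ω} (hab : (α, β) ∈ s) (hbg : (β, γ) ∈ t) (hag : (α, γ) ∈ u) :
    ¬ Sat A Λ u := by
  intro hSatU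
  have htS' : star t ∈ A.S := star_mem_S htS
  have hcnz : A.c u (star t) s ≠ 0 :=
    c_ne_zero ctxU.hv htS' ctxS.hv hag (mem_star.2 hbg) hab
  apply hnsS
  apply sat_of_nbhd_sub ctxS
  intro a b1 hmem b2 hb2
  have hb2' : (a, b2) ∈ s := mem_nbhdF.1 hb2
  obtain ⟨g1, hg1, hg1'⟩ := exists_mid ctxU.hv htS' ctxS.hv hcnz hmem
  obtain ⟨g2, hg2, hg2'⟩ := exists_mid ctxU.hv htS' ctxS.hv hcnz hb2'
  -- g1 and g2 are in the same block
  have hEg : ERel A Λ g1 g2 := by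
    have := ctxU.nbhd_eq_blk hSatU hg1
    exact mem_blk.1 (by rw [← this]; exact mem_nbhdF.2 hg2)
  -- b2 is in the block of b1
  rcases Classical.em (IsThinOn A Λ (star t)) with hthin | hnthin
  · have e1 : ERel A Λ g1 b1 := ⟨star t, hthin, hg1'⟩
    have e2 : ERel A Λ g2 b2 := ⟨star t, hthin, hg2'⟩
    exact mem_blk.2 (ERel.trans hp hΛw (ERel.trans hp hΛw
      (ERel.symm hp hΛw e1) hEg) e2)
  · have htnthin : ¬ IsThinOn A Λ t := fun h => hnthin (thin_star hp hΛw h)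
    have hsatT : Sat A Λ t := intra_sat hp hΛw htS htsub htnthin
    have hsatTS : Sat A Λ (star t) := intra_sat hp hΛw htS' (star_subset htsub) hnthin
    have ctxTS := ctx_intra hp hΛw htS' (star_subset htsub) hnthin
    -- (b2, g1) ∈ t
    have hb2g1 : (b2, g1) ∈ t := hsatT _ _ _ (mem_star.1 hg2') (ERel.symm hp hΛw hEg)
    have := ctxTS.nbhd_eq_blk hsatTS hg1'
    exact (by rw [← this]; exact mem_nbhdF.2 (mem_star.2 hb2g1) : b2 ∈ blk A Λ b1)

/-- case: three pairwise distinct fibers -/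
lemma trans_case_c {Δ Γ Λ : Finset Ω} {s t u : Finset (Ω × Ω)} (hp : p.Prime)
    (ctxS : Ctx A p Δ Γ s) (hnsS : ¬ Sat A Γ s)
    (ctxT : Ctx A p Γ Λ t) (ctxT' : Ctx A p Λ Γ (star t)) (hnsT : ¬ Sat A Λ t)
    (ctxU : Ctx A p Δ Λ u)
    (mkctx : ∀ v ∈ A.S, v ⊆ Δ ×ˢ Λ → Ctx A p Δ Λ v)
    {α β γ : Ω} (hab : (α, β) ∈ s) (hbg : (β, γ) ∈ t) (hag : (α, γ) ∈ u) :
    ¬ Sat A Λ u := by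
  intro hSatU
  have hΓw := ctxS.hΓ
  have hnsT' : ¬ Sat A Γ (star t) := nonsat_star ctxT ctxT' hnsT
  have hβΓ : β ∈ Γ := snd_mem_fiber ctxS.hsub hab
  have hγΛ : γ ∈ Λ := snd_mem_fiber ctxT.hsub hbg
  have hαΔ : α ∈ Δ := fst_mem_fiber ctxS.hsub hab
  -- a point of Γ outside the block of β
  have hblkcard : (blk A Γ β).card < Γ.card := by
    rw [card_blk hΓw hβΓ, wf_card hΓw]
    have := hp.two_le
    nlinarith
  have hsubblk : blk A Γ β ⊆ Γ := fun x hx => (Finset.mem_filter.1 hx).1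
  have hneΓ : blk A Γ β ≠ Γ := by
    intro h
    rw [h] at hblkcard
    omega
  obtain ⟨β₀, hβ₀Γ, hβ₀nb⟩ := (Finset.ssubset_iff_of_subset hsubblk).1
    (lt_of_le_of_ne (Finset.le_iff_subset.2 hsubblk) hneΓ)
  -- a neighbour β' of γ under star t in the block of β₀
  obtain ⟨β', hβ', hβ'E⟩ := ctxT'.nonsat_cover hnsT' hγΛ hβ₀Γ
  have hβ'nb : ¬ ERel A Γ β β' := by
    intro h
    exact hβ₀nb (mem_blk.2 (ERel.trans hp hΓw h (ERel.symm hp hΓw hβ'E)))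
  -- the relation r of (β, β') is non-thin
  set r := relOf A (β, β') with hrdef
  have hrS : r ∈ A.S := relOf_mem_S A _
  have hβ'Γ : β' ∈ Γ := snd_mem_fiber ctxT'.hsub hβ'
  have hrsub : r ⊆ Γ ×ˢ Γ := by
    have := rel_sub hrS (mem_relOf A (β, β'))
    rwa [fib_eq (wf_isFiber hΓw) hβΓ, fib_eq (wf_isFiber hΓw) hβ'Γ] at this
  have hrnt : ¬ IsThinOn A Γ r := fun h => hβ'nb ⟨r, h, mem_relOf A _⟩
  have hrsat : Sat A Γ r := intra_sat hp hΓw hrS hrsub hrnt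
  -- a neighbour β̂ of α under s in the block of β'
  obtain ⟨βh, hβh, hβhE⟩ := ctxS.nonsat_cover hnsS hαΔ hβ'Γ
  have hββh : (β, βh) ∈ r := hrsat _ _ _ (mem_relOf A _) hβhE
  have hβhne : βh ≠ β := by
    intro h
    rw [h] at hβhE
    exact hβ'nb (ERel.symm hp hΓw hβhE)
  -- common neighbour z₁ of β and β̂ under t
  have hcr : A.c t (star t) r ≠ 0 :=
    c_ne_zero ctxT.hv ctxT'.hv hrS hbg hβ' (mem_relOf A _)
  obtain ⟨z₁, hz₁, hz₁'⟩ := exists_mid ctxT.hv ctxT'.hv hrS hcr hββh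
  have hβhz₁ : (βh, z₁) ∈ t := mem_star.1 hz₁'
  -- the relation v of (α, z₁)
  set v := relOf A (α, z₁) with hvdef
  have hvS : v ∈ A.S := relOf_mem_S A _
  have hz₁Λ : z₁ ∈ Λ := snd_mem_fiber ctxT.hsub hz₁
  have hvsub : v ⊆ Δ ×ˢ Λ := by
    have := rel_sub hvS (mem_relOf A (α, z₁))
    rwa [fib_eq (wf_isFiber ctxS.hΔ) hαΔ, fib_eq (wf_isFiber ctxT.hΓ) hz₁Λ] at this
  have ctxV : Ctx A p Δ Λ v := mkctx v hvS hvsub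
  rcases Classical.em (Sat A Λ v) with hsatV | hnsV
  · exact hβhne (middle_unique ctxS ctxT hnsT ctxV hsatV (mem_relOf A (α, z₁))
      hβh hβhz₁ hab hz₁)
  · exact ctxV.nonsat_all hnsV ctxU.hv ctxU.hsub hSatU


lemma mk_ctx' (hp : p.Prime)
    (hfib : ∀ Δ : Finset Ω, IsFiber A Δ → WreathFiber p A Δ)
    (hinter : ∀ u ∈ A.S, ∀ Δ Γ : Finset Ω, IsFiber A Δ → IsFiber A Γ → Δ ≠ Γ →
      u ⊆ Δ ×ˢ Γ → HasValency u p)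
    {Δ Γ : Finset Ω} (hΔ : IsFiber A Δ) (hΓ : IsFiber A Γ) (hne : Δ ≠ Γ)
    {v : Finset (Ω × Ω)} (hv : v ∈ A.S) (hsub : v ⊆ Δ ×ˢ Γ) : Ctx A p Δ Γ v :=
  ctx_inter hp (hfib Δ hΔ) (hfib Γ hΓ) hv hsub
    (fun w hw hwsub => hinter w hw Δ Γ hΔ hΓ hne hwsub)

end CC


open CC in
theorem stmt14 (p : ℕ) (hp : p.Prime) (A : CoherentConfig Ω)
    (hfib : ∀ Δ : Finset Ω, IsFiber A Δ → WreathFiber p A Δ)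
    (hinter : ∀ u ∈ A.S, ∀ Δ Γ : Finset Ω, IsFiber A Δ → IsFiber A Γ → Δ ≠ Γ →
      u ⊆ Δ ×ˢ Γ → HasValency u p) :
    Equivalence (fun α β : Ω => ∃ s ∈ A.S,
      ((∃ Δ : Finset Ω, IsFiber A Δ ∧ s ⊆ Δ ×ˢ Δ) ∨ ¬ Regular A s) ∧ (α, β) ∈ s) := by

  have mkc : ∀ (Δ Γ : Finset Ω), IsFiber A Δ → IsFiber A Γ → Δ ≠ Γ →
      ∀ v ∈ A.S, v ⊆ Δ ×ˢ Γ → Ctx A p Δ Γ v :=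
    fun Δ Γ hΔ hΓ hne v hv hsub => mk_ctx' hp hfib hinter hΔ hΓ hne hv hsub
  have nonsat_of : ∀ {a b : Ω} {w : Finset (Ω × Ω)}, w ∈ A.S → (a, b) ∈ w →
      fib A a ≠ fib A b →
      ((∃ Δ : Finset Ω, IsFiber A Δ ∧ w ⊆ Δ ×ˢ Δ) ∨ ¬ Regular A w) →
      ¬ Sat A (fib A b) w := by
    intro a b w hw hmem hne hcl
    have hwsub := rel_sub hw hmem
    have cw := mkc _ _ (fib_isFiber A a) (fib_isFiber A b) hne w hw hwsub
    have cw' := mkc _ _ (fib_isFiber A b) (fib_isFiber A a) (Ne.symm hne) (star w)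
      (star_mem_S hw) (star_subset hwsub)
    rcases hcl with ⟨Δ', hΔ', hsub'⟩ | h
    · exfalso
      obtain ⟨h1, h2⟩ := Finset.mem_product.1 (hsub' hmem)
      exact hne ((fib_eq hΔ' h1).trans (fib_eq hΔ' h2).symm)
    · exact fun hsat => h (sat_regular cw cw' hsat)
  constructor
  · intro α
    exact ⟨relOf A (α, α), relOf_mem_S A _, Or.inl ⟨fib A α, fib_isFiber A α,
      rel_sub (relOf_mem_S A _) (mem_relOf A _)⟩, mem_relOf A _⟩
  · rintro α β ⟨s, hS, hcl, hab⟩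
    refine ⟨star s, star_mem_S hS, ?_, mem_star.2 hab⟩
    rcases Classical.em (fib A α = fib A β) with heq | hne
    · left
      refine ⟨fib A β, fib_isFiber A β, ?_⟩
      have h := star_subset (rel_sub hS hab)
      rwa [heq] at h
    · right
      have hssub : s ⊆ fib A α ×ˢ fib A β := rel_sub hS hab
      have ctxS := mkc _ _ (fib_isFiber A α) (fib_isFiber A β) hne s hS hssub
      have ctxS' := mkc _ _ (fib_isFiber A β) (fib_isFiber A α) (Ne.symm hne) (star s)
        (star_mem_S hS) (star_subset hssub)
      have hns : ¬ Sat A (fib A β) s := nonsat_of hS hab hne hcl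
      have hns' : ¬ Sat A (fib A α) (star s) := nonsat_star ctxS ctxS' hns
      have ctxSS : Ctx A p (fib A α) (fib A β) (star (star s)) := by rwa [CC.star_star]
      exact nonsat_nonregular ctxS' ctxSS hns'
  · rintro α β γ ⟨s, hS, hclS, hab⟩ ⟨t, htS, hclT, hbg⟩
    have huS : relOf A (α, γ) ∈ A.S := relOf_mem_S A _
    have hag : (α, γ) ∈ relOf A (α, γ) := mem_relOf A _
    have husub : relOf A (α, γ) ⊆ fib A α ×ˢ fib A γ := rel_sub huS hag
    have hssub : s ⊆ fib A α ×ˢ fib A β := rel_sub hS hab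
    have htsub : t ⊆ fib A β ×ˢ fib A γ := rel_sub htS hbg
    rcases Classical.em (fib A α = fib A γ) with heqAG | hneAG
    · exact ⟨relOf A (α, γ), huS, Or.inl ⟨fib A α, fib_isFiber A α,
        by rwa [← heqAG] at husub⟩, hag⟩
    refine ⟨relOf A (α, γ), huS, Or.inr ?_, hag⟩
    have ctxU := mkc _ _ (fib_isFiber A α) (fib_isFiber A γ) hneAG _ huS husub
    have ctxU' := mkc _ _ (fib_isFiber A γ) (fib_isFiber A α) (Ne.symm hneAG)
      (star (relOf A (α, γ))) (star_mem_S huS) (star_subset husub)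
    suffices hnsU : ¬ Sat A (fib A γ) (relOf A (α, γ)) by
      have hnsU' := nonsat_star ctxU ctxU' hnsU
      have ctxUU : Ctx A p (fib A α) (fib A γ) (star (star (relOf A (α, γ)))) := by
        rwa [CC.star_star]
      have h := nonsat_nonregular ctxU ctxU' hnsU
      exact h
    rcases Classical.em (fib A β = fib A α) with heqBA | hneBA
    · -- case a : s lies inside the fiber of α
      have hsintra : s ⊆ fib A α ×ˢ fib A α := by rwa [heqBA] at hssub
      have htsub' : t ⊆ fib A α ×ˢ fib A γ := by rwa [heqBA] at htsub
      have hneBG : fib A β ≠ fib A γ := by rw [heqBA]; exact hneAG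
      have ctxT := mkc _ _ (fib_isFiber A α) (fib_isFiber A γ) hneAG t htS htsub'
      have hnsT : ¬ Sat A (fib A γ) t := nonsat_of htS hbg hneBG hclT
      exact trans_case_a hp (hfib _ (fib_isFiber A α)) hS hsintra ctxT hnsT ctxU ctxU'
        hab hbg hag
    rcases Classical.em (fib A β = fib A γ) with heqBG | hneBG
    · -- case b : t lies inside the fiber of γ
      have htintra : t ⊆ fib A γ ×ˢ fib A γ := by rwa [heqBG] at htsub
      have hssub' : s ⊆ fib A α ×ˢ fib A γ := by rwa [heqBG] at hssub
      have hneAB : fib A α ≠ fib A β := fun h => hneBA h.symm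
      have ctxS := mkc _ _ (fib_isFiber A α) (fib_isFiber A γ) hneAG s hS hssub'
      have hnsS : ¬ Sat A (fib A γ) s := by
        have h := nonsat_of hS hab hneAB hclS
        rwa [heqBG] at h
      exact trans_case_b hp (hfib _ (fib_isFiber A γ)) ctxS hnsS htS htintra ctxU
        hab hbg hag
    · -- case c : three pairwise distinct fibers
      have hneAB : fib A α ≠ fib A β := fun h => hneBA h.symm
      have ctxS := mkc _ _ (fib_isFiber A α) (fib_isFiber A β) hneAB s hS hssub
      have hnsS : ¬ Sat A (fib A β) s := nonsat_of hS hab hneAB hclS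
      have ctxT := mkc _ _ (fib_isFiber A β) (fib_isFiber A γ) hneBG t htS htsub
      have ctxT' := mkc _ _ (fib_isFiber A γ) (fib_isFiber A β) (Ne.symm hneBG) (star t)
        (star_mem_S htS) (star_subset htsub)
      have hnsT : ¬ Sat A (fib A γ) t := nonsat_of htS hbg hneBG hclT
      exact trans_case_c hp ctxS hnsS ctxT ctxT' hnsT ctxU
        (fun v hv hsub => mkc _ _ (fib_isFiber A α) (fib_isFiber A γ) hneAG v hv hsub)
        hab hbg hag
end

section
/- Let (Ω, S) be a coherent configuration with all fibers isomorphic to C_p ≀ C_p and all inter-fiber relations of valency p, and let R denote the set of regular relations, N the union of within-fiber relations with the non-regular relations. Then either R = S or N = S. -/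
/-!
The `p` thin relations of a fiber `Δ` form a group of order `p` acting on `Δ`; its orbits, the
blocks, have size `p`. The group acts on the basis relations `s` into `Δ` by `s ↦ s θ`, and the
stabilizer of `s` is trivial or everything; in the latter case every neighbourhood of `s` is a
block, which makes `s` regular. Inside a fiber there are only `p - 1` non-thin relations, so all of
them are regular. Between two fibers there are exactly `p` basis relations; if one of them is not
regular, its `p` translates are all of them, so none is regular and every neighbourhood of each of
them meets every block in exactly one point.

Composing regular relations through a third fiber gives regular relations, so being joined by a
regular relation is an equivalence relation on the fibers. If `Δ` and `Γ` are joined but `Λ` is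
joined to neither, the constancy of the intersection numbers turns the neighbourhoods of the
relations between `Λ` and `Δ`, `Γ` into the lines of an affine plane on `Λ`: through a point of
`Λ` pass its block and `2p` further lines of size `p` meeting pairwise only there, more than the
`p² - 1` other points of `Λ` allow. Hence one regular relation between distinct fibers joins all
fibers, and then every basis relation is regular.
-/

open Finset
open scoped Classical

variable {Ω : Type} [Fintype Ω] [DecidableEq Ω]

set_option linter.unusedSectionVars false

lemma card_mul_le_card_erase_of_card_inter_eq_one {ι α : Type*} [DecidableEq α] {I : Finset ι}
    {f : ι → Finset α} {X : Finset α} {a : α} {n : ℕ} (hsub : ∀ i ∈ I, f i ⊆ X)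
    (ha : ∀ i ∈ I, a ∈ f i) (hcard : ∀ i ∈ I, (f i).card = n)
    (hmeet : ∀ i ∈ I, ∀ j ∈ I, i ≠ j → (f i ∩ f j).card = 1) :
    I.card * (n - 1) ≤ (X.erase a).card := by
  have hdisj : (I : Set ι).PairwiseDisjoint fun i => (f i).erase a := by
    intro i hi j hj hij
    refine disjoint_left.2 fun b hbi hbj => (mem_erase.1 hbi).1 ?_
    exact card_le_one.1 (hmeet i hi j hj hij).le b
      (mem_inter.2 ⟨(mem_erase.1 hbi).2, (mem_erase.1 hbj).2⟩) a (mem_inter.2 ⟨ha i hi, ha j hj⟩)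
  calc I.card * (n - 1) = (I.biUnion fun i => (f i).erase a).card := by
        rw [card_biUnion hdisj, ← smul_eq_mul, ← sum_const]
        exact sum_congr rfl fun i hi => by rw [card_erase_of_mem (ha i hi), hcard i hi]
    _ ≤ (X.erase a).card :=
        card_le_card (biUnion_subset.2 fun i hi => erase_subset_erase a (hsub i hi))

namespace CoherentConfig

section Relations

variable {s t r : Finset (Ω × Ω)} {Δ Γ Λ : Finset Ω} {a b : Ω}

lemma mem_star : (a, b) ∈ star s ↔ (b, a) ∈ s := by
  simp [_root_.star]

lemma star_star (s : Finset (Ω × Ω)) : star (star s) = s := by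
  ext ⟨a, b⟩
  simp [mem_star]

lemma star_subset_product (h : s ⊆ Δ ×ˢ Γ) : star s ⊆ Γ ×ˢ Δ := by
  rintro ⟨a, b⟩ hab
  simpa [and_comm] using h (mem_star.1 hab)

lemma card_star (s : Finset (Ω × Ω)) : (star s).card = s.card :=
  card_image_of_injective s Prod.swap_injective

lemma mem_diagRel : (a, b) ∈ diagRel Δ ↔ a ∈ Δ ∧ a = b := by
  simp [diagRel, and_comm, eq_comm]

def nbhd (s : Finset (Ω × Ω)) (a : Ω) : Finset Ω := univ.filter fun b => (a, b) ∈ s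

@[simp]
lemma mem_nbhd : b ∈ nbhd s a ↔ (a, b) ∈ s := by
  simp [nbhd]

lemma _root_.HasValency.card_nbhd {n : ℕ} (hv : HasValency s n) (h : (a, b) ∈ s) :
    (nbhd s a).card = n :=
  hv (a, b) h

def relComp (s t : Finset (Ω × Ω)) : Finset (Ω × Ω) :=
  univ.filter fun q => ∃ c, (q.1, c) ∈ s ∧ (c, q.2) ∈ t

lemma mem_relComp : (a, b) ∈ relComp s t ↔ ∃ c, (a, c) ∈ s ∧ (c, b) ∈ t := by
  simp [relComp]

lemma relComp_assoc (r s t : Finset (Ω × Ω)) :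
    relComp (relComp r s) t = relComp r (relComp s t) := by
  ext ⟨a, b⟩
  simp only [mem_relComp]
  exact ⟨fun ⟨c, ⟨d, h1, h2⟩, h3⟩ => ⟨d, h1, c, h2, h3⟩,
    fun ⟨d, h1, c, h2, h3⟩ => ⟨c, ⟨d, h1, h2⟩, h3⟩⟩

lemma relComp_diagRel (h : s ⊆ Λ ×ˢ Δ) : relComp s (diagRel Δ) = s := by
  ext ⟨a, b⟩
  simp only [mem_relComp, mem_diagRel]
  exact ⟨fun ⟨_, h1, _, h2⟩ => h2 ▸ h1, fun hab => ⟨b, hab, (mem_product.1 (h hab)).2, rfl⟩⟩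

lemma diagRel_relComp (h : s ⊆ Δ ×ˢ Λ) : relComp (diagRel Δ) s = s := by
  ext ⟨a, b⟩
  simp only [mem_relComp, mem_diagRel]
  exact ⟨fun ⟨_, ⟨_, h1⟩, h2⟩ => h1 ▸ h2, fun hab => ⟨a, ⟨(mem_product.1 (h hab)).1, rfl⟩, hab⟩⟩

lemma relComp_subset_product (hs : s ⊆ Λ ×ˢ Δ) (ht : t ⊆ Δ ×ˢ Γ) :
    relComp s t ⊆ Λ ×ˢ Γ := by
  rintro ⟨a, b⟩ h
  obtain ⟨c, h1, h2⟩ := mem_relComp.1 h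
  exact mem_product.2 ⟨(mem_product.1 (hs h1)).1, (mem_product.1 (ht h2)).2⟩

/-- The pointwise form of `s s* s = {s}`. -/
def IsRegularRel (s : Finset (Ω × Ω)) : Prop :=
  ∀ ⦃x c d y : Ω⦄, (x, c) ∈ s → (d, c) ∈ s → (d, y) ∈ s → (x, y) ∈ s

lemma IsRegularRel.star (h : IsRegularRel s) : IsRegularRel (star s) :=
  fun _ _ _ _ h1 h2 h3 => mem_star.2 (h (mem_star.1 h3) (mem_star.1 h2) (mem_star.1 h1))

lemma isRegularRel_star_iff : IsRegularRel (star s) ↔ IsRegularRel s :=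
  ⟨fun h => star_star s ▸ h.star, IsRegularRel.star⟩

lemma isRegularRel_of_nbhd_eq (F : Ω → Finset Ω) (h : ∀ ⦃x c⦄, (x, c) ∈ s → nbhd s x = F c) :
    IsRegularRel s := by
  intro x c d y h1 h2 h3
  have hy : y ∈ nbhd s d := mem_nbhd.2 h3
  rwa [h h2, ← h h1, mem_nbhd] at hy

end Relations

section Basis

variable (A : CoherentConfig Ω) {r s t u v : Finset (Ω × Ω)} {Δ Γ Λ : Finset Ω}

noncomputable def basisRel (x : Ω × Ω) : Finset (Ω × Ω) := (A.partition x).exists.choose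

lemma basisRel_mem (x : Ω × Ω) : A.basisRel x ∈ A.S := (A.partition x).exists.choose_spec.1

lemma mem_basisRel (x : Ω × Ω) : x ∈ A.basisRel x := (A.partition x).exists.choose_spec.2

variable {A}

lemma basisRel_eq {x : Ω × Ω} (hs : s ∈ A.S) (hx : x ∈ s) : A.basisRel x = s :=
  (A.partition x).unique ⟨A.basisRel_mem x, A.mem_basisRel x⟩ ⟨hs, hx⟩

lemma eq_of_mem_of_mem {x : Ω × Ω} (hs : s ∈ A.S) (ht : t ∈ A.S) (hxs : x ∈ s) (hxt : x ∈ t) :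
    s = t := by
  rw [← basisRel_eq hs hxs, ← basisRel_eq ht hxt]

lemma disjoint_of_ne (hs : s ∈ A.S) (ht : t ∈ A.S) (hne : s ≠ t) : Disjoint s t :=
  disjoint_left.2 fun _ hxs hxt => hne (eq_of_mem_of_mem hs ht hxs hxt)

lemma star_mem (hs : s ∈ A.S) : star s ∈ A.S := A.symm_mem s hs

lemma c_ne_zero_of_mem (hr : r ∈ A.S) (hs : s ∈ A.S) (hu : u ∈ A.S) {x y c : Ω}
    (hxy : (x, y) ∈ u) (h1 : (x, c) ∈ r) (h2 : (c, y) ∈ s) : A.c r s u ≠ 0 := by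
  rw [← A.c_spec r hr s hs u hu (x, y) hxy]
  exact card_ne_zero_of_mem (mem_filter.2 ⟨mem_univ c, h1, h2⟩)

lemma exists_of_c_ne_zero (hr : r ∈ A.S) (hs : s ∈ A.S) (hu : u ∈ A.S) {x y : Ω}
    (hxy : (x, y) ∈ u) (h : A.c r s u ≠ 0) : ∃ c, (x, c) ∈ r ∧ (c, y) ∈ s := by
  rw [← A.c_spec r hr s hs u hu (x, y) hxy] at h
  obtain ⟨c, hc⟩ := card_ne_zero.1 h
  exact ⟨c, (mem_filter.1 hc).2⟩

lemma exists_path_of_mem (hr : r ∈ A.S) (hs : s ∈ A.S) (hu : u ∈ A.S) {x y x' y' c : Ω}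
    (hxy : (x, y) ∈ u) (hxy' : (x', y') ∈ u) (h1 : (x, c) ∈ r) (h2 : (c, y) ∈ s) :
    ∃ c', (x', c') ∈ r ∧ (c', y') ∈ s :=
  exists_of_c_ne_zero hr hs hu hxy' (c_ne_zero_of_mem hr hs hu hxy h1 h2)

lemma isRegularRel_of_regular (hs : s ∈ A.S) (hre : Regular A s) : IsRegularRel s := by
  intro x c d y h1 h2 h3
  have hv : A.c s (star s) (A.basisRel (x, d)) ≠ 0 :=
    c_ne_zero_of_mem hs (star_mem hs) (A.basisRel_mem _) (A.mem_basisRel _) h1 (mem_star.2 h2)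
  have hu : A.c (A.basisRel (x, d)) s (A.basisRel (x, y)) ≠ 0 :=
    c_ne_zero_of_mem (A.basisRel_mem _) hs (A.basisRel_mem _) (A.mem_basisRel _)
      (A.mem_basisRel _) h3
  have hmem : A.basisRel (x, y) ∈ cprod A (cprod A {s} {star s}) {s} :=
    mem_filter.2 ⟨A.basisRel_mem _, _, mem_filter.2 ⟨A.basisRel_mem _, s, mem_singleton_self s,
      star s, mem_singleton_self _, hv⟩, s, mem_singleton_self s, hu⟩
  rw [Regular] at hre
  rw [hre, mem_singleton] at hmem
  exact hmem ▸ A.mem_basisRel (x, y)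

lemma regular_of_isRegularRel (hs : s ∈ A.S) (hreg : IsRegularRel s) : Regular A s := by
  ext u
  simp only [cprod, mem_filter, mem_singleton]
  constructor
  · rintro ⟨hu, v, ⟨hv, _, rfl, _, rfl, hcv⟩, _, rfl, hcu⟩
    obtain ⟨⟨x, y⟩, hxy⟩ := A.nonempty_mem u hu
    obtain ⟨d, hxd, hdy⟩ := exists_of_c_ne_zero hv hs hu hxy hcu
    obtain ⟨c, hxc, hcd⟩ := exists_of_c_ne_zero hs (star_mem hs) hv hxd hcv
    exact eq_of_mem_of_mem hu hs hxy (hreg hxc (mem_star.1 hcd) hdy)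
  · rintro rfl
    obtain ⟨⟨x, y⟩, hxy⟩ := A.nonempty_mem u hs
    refine ⟨hs, A.basisRel (x, x), ⟨A.basisRel_mem _, u, rfl, star u, rfl, ?_⟩, u, rfl, ?_⟩
    · exact c_ne_zero_of_mem hs (star_mem hs) (A.basisRel_mem _) (A.mem_basisRel _) hxy
        (mem_star.2 hxy)
    · exact c_ne_zero_of_mem (A.basisRel_mem _) hs hs hxy (A.mem_basisRel _) hxy

end Basis

section Fibers

variable {A : CoherentConfig Ω} {s : Finset (Ω × Ω)} {Δ Γ Λ : Finset Ω}

noncomputable def fiberOf (A : CoherentConfig Ω) (a : Ω) : Finset Ω :=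
  (A.basisRel (a, a)).image Prod.fst

lemma diagRel_fiberOf (a : Ω) : diagRel (A.fiberOf a) = A.basisRel (a, a) := by
  have hdiag := A.diag_union _ (A.basisRel_mem _) ⟨(a, a), A.mem_basisRel _, rfl⟩
  ext ⟨x, y⟩
  simp only [mem_diagRel, fiberOf, mem_image]
  constructor
  · rintro ⟨⟨⟨x, y⟩, hq, rfl⟩, rfl⟩
    convert hq using 2
    exact hdiag _ hq
  · intro h
    exact ⟨⟨_, h, rfl⟩, hdiag _ h⟩

lemma isFiber_fiberOf (a : Ω) : IsFiber A (A.fiberOf a) := by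
  rw [IsFiber, diagRel_fiberOf]
  exact A.basisRel_mem _

lemma mem_fiberOf (a : Ω) : a ∈ A.fiberOf a :=
  mem_image.2 ⟨(a, a), A.mem_basisRel _, rfl⟩

lemma eq_fiberOf_of_mem (hΔ : IsFiber A Δ) {a : Ω} (ha : a ∈ Δ) : Δ = A.fiberOf a := by
  have h : diagRel Δ = diagRel (A.fiberOf a) := by
    rw [diagRel_fiberOf, basisRel_eq hΔ (mem_diagRel.2 ⟨ha, rfl⟩)]
  ext b
  simpa [mem_diagRel] using congrArg (fun d => (b, b) ∈ d) h

lemma subset_fiberOf_product (hs : s ∈ A.S) {a b : Ω} (hab : (a, b) ∈ s) :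
    s ⊆ A.fiberOf a ×ˢ A.fiberOf b := by
  rintro ⟨x, y⟩ hxy
  have hdiag (c : Ω) : (c, c) ∈ diagRel (A.fiberOf c) := mem_diagRel.2 ⟨mem_fiberOf c, rfl⟩
  obtain ⟨_, hx, _⟩ := exists_path_of_mem (isFiber_fiberOf a) hs hs hab hxy (hdiag a) hab
  obtain ⟨_, _, hy⟩ := exists_path_of_mem hs (isFiber_fiberOf b) hs hab hxy hab (hdiag b)
  exact mem_product.2 ⟨(mem_diagRel.1 hx).1, (mem_diagRel.1 hy).2 ▸ (mem_diagRel.1 hy).1⟩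

lemma subset_product_of_mem (hs : s ∈ A.S) (hΔ : IsFiber A Δ) (hΓ : IsFiber A Γ) {a b : Ω}
    (hab : (a, b) ∈ s) (ha : a ∈ Δ) (hb : b ∈ Γ) : s ⊆ Δ ×ˢ Γ := by
  rw [eq_fiberOf_of_mem hΔ ha, eq_fiberOf_of_mem hΓ hb]
  exact subset_fiberOf_product hs hab

lemma nbhd_nonempty (hs : s ∈ A.S) (hsub : s ⊆ Δ ×ˢ Γ) (hΔ : IsFiber A Δ) {a : Ω}
    (ha : a ∈ Δ) : (nbhd s a).Nonempty := by
  obtain ⟨⟨x, y⟩, hxy⟩ := A.nonempty_mem s hs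
  obtain ⟨b, hb, _⟩ := exists_path_of_mem hs (star_mem hs) hΔ
    (mem_diagRel.2 ⟨(mem_product.1 (hsub hxy)).1, rfl⟩) (mem_diagRel.2 ⟨ha, rfl⟩) hxy
    (mem_star.2 hxy)
  exact ⟨b, mem_nbhd.2 hb⟩

lemma card_eq_mul_of_hasValency (hs : s ∈ A.S) (hsub : s ⊆ Δ ×ˢ Γ) (hΔ : IsFiber A Δ)
    {n : ℕ} (hv : HasValency s n) : s.card = Δ.card * n := by
  rw [card_eq_sum_card_fiberwise fun q hq => (mem_product.1 (hsub hq)).1, ← smul_eq_mul,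
    ← sum_const]
  refine sum_congr rfl fun a ha => ?_
  obtain ⟨b, hb⟩ := nbhd_nonempty hs hsub hΔ ha
  rw [← hv.card_nbhd (mem_nbhd.1 hb)]
  refine card_bij (fun q _ => q.2) (fun q hq => ?_) (fun q hq q' hq' h => ?_)
    (fun c hc => ⟨(a, c), by simpa using hc, rfl⟩)
  · obtain ⟨hq, rfl⟩ := mem_filter.1 hq
    simpa using hq
  · exact Prod.ext ((mem_filter.1 hq).2.trans (mem_filter.1 hq').2.symm) h

noncomputable def basisRelsIn (A : CoherentConfig Ω) (Δ Γ : Finset Ω) : Finset (Finset (Ω × Ω)) :=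
  A.S.filter (· ⊆ Δ ×ˢ Γ)

lemma mem_basisRelsIn : s ∈ A.basisRelsIn Δ Γ ↔ s ∈ A.S ∧ s ⊆ Δ ×ˢ Γ := mem_filter

lemma basisRel_mem_basisRelsIn (hΔ : IsFiber A Δ) (hΓ : IsFiber A Γ) {a b : Ω} (ha : a ∈ Δ)
    (hb : b ∈ Γ) : A.basisRel (a, b) ∈ A.basisRelsIn Δ Γ :=
  mem_basisRelsIn.2 ⟨A.basisRel_mem _,
    subset_product_of_mem (A.basisRel_mem _) hΔ hΓ (A.mem_basisRel _) ha hb⟩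

lemma sum_card_basisRelsIn (hΔ : IsFiber A Δ) (hΓ : IsFiber A Γ) :
    ∑ s ∈ A.basisRelsIn Δ Γ, s.card = Δ.card * Γ.card := by
  rw [← card_product, ← card_biUnion fun s hs t ht hne =>
    disjoint_of_ne (mem_basisRelsIn.1 hs).1 (mem_basisRelsIn.1 ht).1 hne]
  congr 1
  ext ⟨a, b⟩
  simp only [mem_biUnion]
  refine ⟨fun ⟨s, hs, hab⟩ => (mem_basisRelsIn.1 hs).2 hab, fun hab => ?_⟩
  obtain ⟨ha, hb⟩ := mem_product.1 hab
  exact ⟨_, basisRel_mem_basisRelsIn hΔ hΓ ha hb, A.mem_basisRel _⟩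

lemma sum_card_nbhd_inter (hΛ : IsFiber A Λ) (hΓ : IsFiber A Γ) {a : Ω} (ha : a ∈ Λ)
    {B : Finset Ω} (hB : B ⊆ Γ) :
    ∑ s ∈ A.basisRelsIn Λ Γ, (nbhd s a ∩ B).card = B.card := by
  rw [← card_biUnion fun s hs t ht hne => ?_]
  · congr 1
    ext b
    simp only [mem_biUnion, mem_inter, mem_nbhd]
    refine ⟨fun ⟨_, _, _, hb⟩ => hb, fun hb => ?_⟩
    exact ⟨_, basisRel_mem_basisRelsIn hΛ hΓ ha (hB hb), A.mem_basisRel _, hb⟩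
  · have hd := disjoint_of_ne (mem_basisRelsIn.1 hs).1 (mem_basisRelsIn.1 ht).1 hne
    exact disjoint_left.2 fun b hbs hbt =>
      disjoint_left.1 hd (mem_nbhd.1 (mem_inter.1 hbs).1) (mem_nbhd.1 (mem_inter.1 hbt).1)

/-- Double counting the pairs `(l, z)` with `(x, l) ∈ r`, `(l, z) ∈ w` and `z ∈ D`: all `z ∈ D`
see the same intersection number `c r w v`. -/
lemma card_nbhd_inter_nbhd_star_eq_one {r w v : Finset (Ω × Ω)}
    (hr : r ∈ A.S) (hw : w ∈ A.S) (hv : v ∈ A.S) {x y : Ω} {D : Finset Ω} (hy : y ∈ D)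
    (hD : ∀ z ∈ D, (x, z) ∈ v) {n : ℕ} (hn : 0 < n) (hDcard : D.card = n)
    (hrcard : (nbhd r x).card = n) (hw1 : ∀ l ∈ nbhd r x, (nbhd w l ∩ D).card = 1) :
    (nbhd r x ∩ nbhd (star w) y).card = 1 := by
  have hc : ∀ z ∈ D, (nbhd r x ∩ nbhd (star w) z).card = A.c r w v := by
    intro z hz
    rw [← A.c_spec r hr w hw v hv (x, z) (hD z hz)]
    congr 1
    ext l
    simp [mem_star]
  have hcount := sum_card_bipartiteAbove_eq_sum_card_bipartiteBelow (s := nbhd r x) (t := D)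
    (r := fun l z => (l, z) ∈ w)
  have hleft : ∀ l ∈ nbhd r x, (D.bipartiteAbove (fun l z => (l, z) ∈ w) l).card = 1 := by
    intro l hl
    rw [← hw1 l hl, bipartiteAbove, inter_comm, ← filter_mem_eq_inter]
    simp only [mem_nbhd]
  have hright : ∀ z ∈ D,
      ((nbhd r x).bipartiteBelow (fun l z => (l, z) ∈ w) z).card = A.c r w v := by
    intro z hz
    rw [← hc z hz, bipartiteBelow, ← filter_mem_eq_inter]
    simp [mem_star]
  rw [sum_congr rfl hleft, sum_congr rfl hright, sum_const, sum_const, smul_eq_mul, smul_eq_mul,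
    hrcard, hDcard] at hcount
  exact (hc y hy).trans (Nat.eq_of_mul_eq_mul_left hn hcount).symm

end Fibers

section ThinRelations

variable {A : CoherentConfig Ω} {p : ℕ} {s θ θ' : Finset (Ω × Ω)} {Δ Λ : Finset Ω} {a b : Ω}

noncomputable def thins (A : CoherentConfig Ω) (Δ : Finset Ω) : Finset (Finset (Ω × Ω)) :=
  A.S.filter (IsThinOn A Δ)

/-- Its classes are the blocks of imprimitivity of the wreath product `C_p ≀ C_p` on `Δ`. -/
noncomputable def blockRel (A : CoherentConfig Ω) (Δ : Finset Ω) : Finset (Ω × Ω) :=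
  (A.thins Δ).biUnion id

lemma mem_thins : θ ∈ A.thins Δ ↔ IsThinOn A Δ θ :=
  ⟨fun h => (mem_filter.1 h).2, fun h => mem_filter.2 ⟨h.1, h⟩⟩

lemma mem_blockRel {q : Ω × Ω} : q ∈ A.blockRel Δ ↔ ∃ θ, IsThinOn A Δ θ ∧ q ∈ θ := by
  simp [blockRel, mem_thins]

lemma _root_.WreathFiber.isFiber (hW : WreathFiber p A Δ) : IsFiber A Δ := hW.1

lemma _root_.WreathFiber.card_eq (hW : WreathFiber p A Δ) : Δ.card = p ^ 2 := hW.2.1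

lemma _root_.WreathFiber.card_thins (hW : WreathFiber p A Δ) : (A.thins Δ).card = p := hW.2.2.1

lemma _root_.WreathFiber.hasValency_of_not_isThinOn (hW : WreathFiber p A Δ) (hs : s ∈ A.S)
    (hsub : s ⊆ Δ ×ˢ Δ) (hnt : ¬ IsThinOn A Δ s) : HasValency s p :=
  (hW.2.2.2.1 s hs hsub).resolve_left fun h => hnt ⟨hs, hsub, h⟩

lemma isThinOn_diagRel (hΔ : IsFiber A Δ) : IsThinOn A Δ (diagRel Δ) := by
  refine ⟨hΔ, fun q hq => ?_, fun q hq => ?_⟩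
  · obtain ⟨h1, h2⟩ := mem_diagRel.1 hq
    exact mem_product.2 ⟨h1, h2 ▸ h1⟩
  · rw [card_eq_one]
    exact ⟨q.1, by ext c; simp [mem_diagRel, (mem_diagRel.1 hq).1, eq_comm]⟩

lemma _root_.IsThinOn.card_eq (hθ : IsThinOn A Δ θ) (hΔ : IsFiber A Δ) : θ.card = Δ.card := by
  rw [card_eq_mul_of_hasValency hθ.1 hθ.2.1 hΔ hθ.2.2, mul_one]

lemma _root_.IsThinOn.star (hθ : IsThinOn A Δ θ) (hp : p.Prime) (hW : WreathFiber p A Δ) :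
    IsThinOn A Δ (star θ) := by
  have hsub := star_subset_product hθ.2.1
  refine ⟨star_mem hθ.1, hsub, by_contra fun hv => ?_⟩
  have hvp := hW.hasValency_of_not_isThinOn (star_mem hθ.1) hsub fun h => hv h.2.2
  have hcard := card_eq_mul_of_hasValency (star_mem hθ.1) hsub hW.isFiber hvp
  rw [card_star, hθ.card_eq hW.isFiber, hW.card_eq] at hcard
  have := Nat.eq_of_mul_eq_mul_left (pow_pos hp.pos 2) (hcard.symm.trans (mul_one _).symm)
  exact hp.one_lt.ne' this

lemma _root_.WreathFiber.isThinOn_of_path (hW : WreathFiber p A Δ) (hp : p.Prime)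
    (hθ : IsThinOn A Δ θ) (hθ' : IsThinOn A Δ θ') {u : Finset (Ω × Ω)} (hu : u ∈ A.S)
    {x y c : Ω} (hxy : (x, y) ∈ u) (h1 : (x, c) ∈ θ) (h2 : (c, y) ∈ θ') : IsThinOn A Δ u := by
  refine hW.2.2.2.2 θ (star θ') u hθ (hθ'.star hp hW) hu ?_
  rw [star_star]
  exact c_ne_zero_of_mem hθ.1 hθ'.1 hu hxy h1 h2

/-- A thin relation as a map; the identity off its domain. -/
noncomputable def thinMap (θ : Finset (Ω × Ω)) (a : Ω) : Ω :=
  if h : (nbhd θ a).Nonempty then h.choose else a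

lemma mem_thinMap (hθ : IsThinOn A Δ θ) (hΔ : IsFiber A Δ) (ha : a ∈ Δ) :
    (a, thinMap θ a) ∈ θ := by
  have h := nbhd_nonempty hθ.1 hθ.2.1 hΔ ha
  rw [thinMap, dif_pos h]
  exact mem_nbhd.1 h.choose_spec

lemma eq_thinMap (hθ : IsThinOn A Δ θ) (h : (a, b) ∈ θ) : b = thinMap θ a := by
  have hne : (nbhd θ a).Nonempty := ⟨b, mem_nbhd.2 h⟩
  have hmem : thinMap θ a ∈ nbhd θ a := by
    rw [thinMap, dif_pos hne]
    exact hne.choose_spec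
  exact card_le_one.1 (hθ.2.2.card_nbhd h).le _ (mem_nbhd.2 h) _ hmem

lemma thinMap_injOn (hθ : IsThinOn A Δ θ) (hp : p.Prime) (hW : WreathFiber p A Δ) :
    Set.InjOn (thinMap θ) Δ := by
  intro a ha b hb h
  have hθ' := hθ.star hp hW
  have h1 : (thinMap θ a, a) ∈ star θ := mem_star.2 (mem_thinMap hθ hW.isFiber ha)
  have h2 : (thinMap θ a, b) ∈ star θ := h ▸ mem_star.2 (mem_thinMap hθ hW.isFiber hb)
  exact (eq_thinMap hθ' h1).trans (eq_thinMap hθ' h2).symm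

lemma relComp_star_of_isThinOn (hθ : IsThinOn A Δ θ) (hp : p.Prime) (hW : WreathFiber p A Δ) :
    relComp θ (star θ) = diagRel Δ := by
  ext ⟨a, b⟩
  rw [mem_relComp, mem_diagRel]
  constructor
  · rintro ⟨c, h1, h2⟩
    have h2' : (b, c) ∈ θ := mem_star.1 h2
    have ha : a ∈ Δ := (mem_product.1 (hθ.2.1 h1)).1
    have hb : b ∈ Δ := (mem_product.1 (hθ.2.1 h2')).1
    exact ⟨ha, thinMap_injOn hθ hp hW ha hb ((eq_thinMap hθ h1).symm.trans (eq_thinMap hθ h2'))⟩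
  · rintro ⟨ha, rfl⟩
    exact ⟨thinMap θ a, mem_thinMap hθ hW.isFiber ha, mem_star.2 (mem_thinMap hθ hW.isFiber ha)⟩

lemma star_relComp_of_isThinOn (hθ : IsThinOn A Δ θ) (hp : p.Prime) (hW : WreathFiber p A Δ) :
    relComp (star θ) θ = diagRel Δ := by
  simpa [star_star] using relComp_star_of_isThinOn (hθ.star hp hW) hp hW

/-- The basis relation `u` through one pair of `s θ` is contained in `s θ`, and
`|s θ| ≤ |s| ≤ |u|` because `θ` and `θ*` are maps. -/
lemma relComp_mem (hs : s ∈ A.S) (hsub : s ⊆ Λ ×ˢ Δ) (hθ : IsThinOn A Δ θ) (hp : p.Prime)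
    (hW : WreathFiber p A Δ) : relComp s θ ∈ A.S := by
  obtain ⟨⟨a, b⟩, hab⟩ := A.nonempty_mem s hs
  have hbθ := mem_thinMap hθ hW.isFiber (mem_product.1 (hsub hab)).2
  set u := A.basisRel (a, thinMap θ b)
  have hu_sub : u ⊆ relComp s θ := by
    rintro ⟨x, y⟩ hxy
    obtain ⟨c, h1, h2⟩ := exists_path_of_mem hs hθ.1 (A.basisRel_mem _) (A.mem_basisRel _) hxy
      hab hbθ
    exact mem_relComp.2 ⟨c, h1, h2⟩
  have hcomp_le : (relComp s θ).card ≤ s.card := by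
    refine (card_le_card fun q hq => ?_).trans (card_image_le (f := fun q => (q.1, thinMap θ q.2)))
    obtain ⟨c, h1, h2⟩ := mem_relComp.1 hq
    exact mem_image.2 ⟨(q.1, c), h1, by rw [← eq_thinMap hθ h2]⟩
  have hs_le : s.card ≤ u.card := by
    have hθ' := hθ.star hp hW
    refine (card_le_card fun q hq => ?_).trans
      (card_image_le (f := fun q => (q.1, thinMap (star θ) q.2)))
    obtain ⟨c, h1, h2⟩ := exists_path_of_mem (A.basisRel_mem _) hθ'.1 hs hab hq
      (A.mem_basisRel _) (mem_star.2 hbθ)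
    exact mem_image.2 ⟨(q.1, c), h1, by rw [← eq_thinMap hθ' h2]⟩
  rw [← eq_of_subset_of_card_le hu_sub (hcomp_le.trans hs_le)]
  exact A.basisRel_mem _

lemma nbhd_relComp (hsub : s ⊆ Λ ×ˢ Δ) (hθ : IsThinOn A Δ θ) (hΔ : IsFiber A Δ) (a : Ω) :
    nbhd (relComp s θ) a = (nbhd s a).image (thinMap θ) := by
  ext c
  simp only [mem_nbhd, mem_relComp, mem_image]
  constructor
  · rintro ⟨b, h1, h2⟩
    exact ⟨b, h1, (eq_thinMap hθ h2).symm⟩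
  · rintro ⟨b, h1, rfl⟩
    exact ⟨b, h1, mem_thinMap hθ hΔ (mem_product.1 (hsub h1)).2⟩

lemma _root_.IsThinOn.relComp (hθ : IsThinOn A Δ θ) (hθ' : IsThinOn A Δ θ') (hp : p.Prime)
    (hW : WreathFiber p A Δ) : IsThinOn A Δ (relComp θ θ') := by
  have hmem := relComp_mem hθ.1 hθ.2.1 hθ' hp hW
  obtain ⟨⟨a, b⟩, hab⟩ := A.nonempty_mem θ hθ.1
  have hb := mem_thinMap hθ' hW.isFiber (mem_product.1 (hθ.2.1 hab)).2
  exact hW.isThinOn_of_path hp hθ hθ' hmem (mem_relComp.2 ⟨b, hab, hb⟩) hab hb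

lemma blockRel_subset : A.blockRel Δ ⊆ Δ ×ˢ Δ := fun _ hq =>
  let ⟨_, hθ, hq⟩ := mem_blockRel.1 hq
  hθ.2.1 hq

lemma blockRel_refl (hΔ : IsFiber A Δ) (ha : a ∈ Δ) : (a, a) ∈ A.blockRel Δ :=
  mem_blockRel.2 ⟨diagRel Δ, isThinOn_diagRel hΔ, mem_diagRel.2 ⟨ha, rfl⟩⟩

lemma blockRel_symm (hp : p.Prime) (hW : WreathFiber p A Δ) (h : (a, b) ∈ A.blockRel Δ) :
    (b, a) ∈ A.blockRel Δ :=
  let ⟨θ, hθ, hab⟩ := mem_blockRel.1 h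
  mem_blockRel.2 ⟨star θ, hθ.star hp hW, mem_star.2 hab⟩

lemma blockRel_trans (hp : p.Prime) (hW : WreathFiber p A Δ) {c : Ω}
    (h1 : (a, b) ∈ A.blockRel Δ) (h2 : (b, c) ∈ A.blockRel Δ) : (a, c) ∈ A.blockRel Δ := by
  obtain ⟨θ, hθ, hab⟩ := mem_blockRel.1 h1
  obtain ⟨θ', hθ', hbc⟩ := mem_blockRel.1 h2
  exact mem_blockRel.2 ⟨_, hW.isThinOn_of_path hp hθ hθ' (A.basisRel_mem _)
    (A.mem_basisRel (a, c)) hab hbc, A.mem_basisRel _⟩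

lemma card_nbhd_blockRel (hW : WreathFiber p A Δ) (ha : a ∈ Δ) :
    (nbhd (A.blockRel Δ) a).card = p := by
  have h : nbhd (A.blockRel Δ) a = (A.thins Δ).biUnion fun θ => nbhd θ a := by
    ext c
    simp [mem_blockRel, mem_thins]
  rw [h, card_biUnion fun θ hθ θ' hθ' hne => disjoint_left.2 fun c hc hc' =>
    hne (eq_of_mem_of_mem (mem_thins.1 hθ).1 (mem_thins.1 hθ').1 (mem_nbhd.1 hc)
      (mem_nbhd.1 hc')), ← hW.card_thins, card_eq_sum_ones]
  refine sum_congr rfl fun θ hθ => ?_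
  exact (mem_thins.1 hθ).2.2.card_nbhd (mem_thinMap (mem_thins.1 hθ) hW.isFiber ha)

lemma nbhd_relComp_inter_block (hsub : s ⊆ Λ ×ˢ Δ) (hθ : IsThinOn A Δ θ) (hp : p.Prime)
    (hW : WreathFiber p A Δ) (a c : Ω) :
    nbhd (relComp s θ) a ∩ nbhd (A.blockRel Δ) c =
      (nbhd s a ∩ nbhd (A.blockRel Δ) c).image (thinMap θ) := by
  have hblock {b : Ω} (hb : b ∈ Δ) : (b, thinMap θ b) ∈ A.blockRel Δ :=
    mem_blockRel.2 ⟨θ, hθ, mem_thinMap hθ hW.isFiber hb⟩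
  ext d
  simp only [nbhd_relComp hsub hθ hW.isFiber, mem_inter, mem_image, mem_nbhd]
  constructor
  · rintro ⟨⟨b, hab, rfl⟩, hcd⟩
    exact ⟨b, ⟨hab, blockRel_trans hp hW hcd
      (blockRel_symm hp hW (hblock (mem_product.1 (hsub hab)).2))⟩, rfl⟩
  · rintro ⟨b, ⟨hab, hcb⟩, rfl⟩
    exact ⟨⟨b, hab, rfl⟩, blockRel_trans hp hW hcb (hblock (mem_product.1 (hsub hab)).2)⟩

end ThinRelations

section Stabilizer

variable {A : CoherentConfig Ω} {p : ℕ} {s θ η : Finset (Ω × Ω)} {Δ Λ : Finset Ω}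

def HasBlockNbhds (A : CoherentConfig Ω) (Δ : Finset Ω) (s : Finset (Ω × Ω)) : Prop :=
  ∀ ⦃x y : Ω⦄, (x, y) ∈ s → nbhd s x = nbhd (A.blockRel Δ) y

lemma HasBlockNbhds.isRegularRel (h : HasBlockNbhds A Δ s) : IsRegularRel s :=
  isRegularRel_of_nbhd_eq _ h

/-- The level sets of `θ ↦ s θ` are the cosets of the stabilizer of `s`. -/
lemma card_filter_relComp_eq (hsub : s ⊆ Λ ×ˢ Δ) (hp : p.Prime) (hW : WreathFiber p A Δ)
    (hθ : IsThinOn A Δ θ) :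
    ((A.thins Δ).filter fun η => relComp s η = relComp s θ).card =
      ((A.thins Δ).filter fun η => relComp s η = s).card := by
  have hθ' := hθ.star hp hW
  refine (card_bij (fun η _ => relComp η θ) (fun η hη => ?_) (fun η₁ h₁ η₂ h₂ h => ?_)
    (fun η hη => ?_)).symm
  · obtain ⟨hη, hsη⟩ := mem_filter.1 hη
    exact mem_filter.2 ⟨mem_thins.2 ((mem_thins.1 hη).relComp hθ hp hW),
      by rw [← relComp_assoc, hsη]⟩
  · have hcancel {η : Finset (Ω × Ω)} (hη : η ∈ A.thins Δ) :
        relComp (relComp η θ) (star θ) = η := by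
      rw [relComp_assoc, relComp_star_of_isThinOn hθ hp hW,
        relComp_diagRel (mem_thins.1 hη).2.1]
    rw [← hcancel (mem_filter.1 h₁).1, ← hcancel (mem_filter.1 h₂).1, h]
  · obtain ⟨hη, hsη⟩ := mem_filter.1 hη
    refine ⟨relComp η (star θ), mem_filter.2 ⟨mem_thins.2 ((mem_thins.1 hη).relComp hθ' hp hW),
      ?_⟩, ?_⟩
    · rw [← relComp_assoc, hsη, relComp_assoc, relComp_star_of_isThinOn hθ hp hW,
        relComp_diagRel hsub]
    · rw [relComp_assoc, star_relComp_of_isThinOn hθ hp hW,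
        relComp_diagRel (mem_thins.1 hη).2.1]

lemma card_stabilizer_dvd (hsub : s ⊆ Λ ×ˢ Δ) (hp : p.Prime) (hW : WreathFiber p A Δ) :
    ((A.thins Δ).filter fun η => relComp s η = s).card ∣ p := by
  rw [← hW.card_thins, card_eq_sum_card_image (relComp s) (A.thins Δ),
    sum_congr rfl fun t ht => ?_, sum_const, smul_eq_mul]
  · exact dvd_mul_left _ _
  · obtain ⟨θ, hθ, rfl⟩ := mem_image.1 ht
    exact card_filter_relComp_eq hsub hp hW (mem_thins.1 hθ)

/-- The stabilizer of `s` is a subgroup of the group of order `p` formed by the thin relations. -/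
lemma relComp_eq_self_of_ne_diagRel (hsub : s ⊆ Λ ×ˢ Δ) (hp : p.Prime) (hW : WreathFiber p A Δ)
    (hη : IsThinOn A Δ η) (hne : η ≠ diagRel Δ) (hstab : relComp s η = s)
    (hθ : IsThinOn A Δ θ) : relComp s θ = s := by
  set St := (A.thins Δ).filter fun η => relComp s η = s
  have hlt : 1 < St.card := one_lt_card.2 ⟨η, mem_filter.2 ⟨mem_thins.2 hη, hstab⟩, diagRel Δ,
    mem_filter.2 ⟨mem_thins.2 (isThinOn_diagRel hW.isFiber), relComp_diagRel hsub⟩, hne⟩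
  have hall : St = A.thins Δ := by
    refine eq_of_subset_of_card_le (filter_subset _ _) ?_
    rw [hW.card_thins, ((Nat.dvd_prime hp).1 (card_stabilizer_dvd hsub hp hW)).resolve_left
      hlt.ne']
  have hθS : θ ∈ St := hall ▸ mem_thins.2 hθ
  exact (mem_filter.1 hθS).2

lemma hasBlockNbhds_of_forall_relComp_eq (hsub : s ⊆ Λ ×ˢ Δ) (hW : WreathFiber p A Δ)
    (hval : HasValency s p) (hstab : ∀ θ, IsThinOn A Δ θ → relComp s θ = s) :
    HasBlockNbhds A Δ s := by
  intro x y hxy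
  have hle : nbhd (A.blockRel Δ) y ⊆ nbhd s x := fun z hz => by
    obtain ⟨θ, hθ, hyz⟩ := mem_blockRel.1 (mem_nbhd.1 hz)
    rw [mem_nbhd, ← hstab θ hθ]
    exact mem_relComp.2 ⟨y, hxy, hyz⟩
  refine (eq_of_subset_of_card_le hle ?_).symm
  rw [card_nbhd_blockRel hW (mem_product.1 (hsub hxy)).2, hval.card_nbhd hxy]

lemma hasBlockNbhds_of_relComp_eq (hsub : s ⊆ Λ ×ˢ Δ) (hp : p.Prime) (hW : WreathFiber p A Δ)
    (hval : HasValency s p) {θ₁ θ₂ : Finset (Ω × Ω)} (hθ₁ : IsThinOn A Δ θ₁)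
    (hθ₂ : IsThinOn A Δ θ₂) (hne : θ₁ ≠ θ₂) (heq : relComp s θ₁ = relComp s θ₂) :
    HasBlockNbhds A Δ s := by
  have hηne : relComp θ₁ (star θ₂) ≠ diagRel Δ := fun h => hne <| by
    rw [← relComp_diagRel hθ₁.2.1, ← star_relComp_of_isThinOn hθ₂ hp hW, ← relComp_assoc, h,
      diagRel_relComp hθ₂.2.1]
  have hstab : relComp s (relComp θ₁ (star θ₂)) = s := by
    rw [← relComp_assoc, heq, relComp_assoc, relComp_star_of_isThinOn hθ₂ hp hW,
      relComp_diagRel hsub]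
  exact hasBlockNbhds_of_forall_relComp_eq hsub hW hval fun θ hθ =>
    relComp_eq_self_of_ne_diagRel hsub hp hW (hθ₁.relComp (hθ₂.star hp hW) hp hW) hηne hstab hθ

end Stabilizer

section WithinFiber

variable {A : CoherentConfig Ω} {p : ℕ} {s : Finset (Ω × Ω)} {Δ : Finset Ω}

lemma card_basisRelsIn_sdiff_thins (hp : p.Prime) (hW : WreathFiber p A Δ) :
    (A.basisRelsIn Δ Δ \ A.thins Δ).card = p - 1 := by
  have hsub : A.thins Δ ⊆ A.basisRelsIn Δ Δ := fun θ hθ =>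
    mem_basisRelsIn.2 ⟨(mem_thins.1 hθ).1, (mem_thins.1 hθ).2.1⟩
  have hnonthin : ∑ s ∈ A.basisRelsIn Δ Δ \ A.thins Δ, s.card =
      (A.basisRelsIn Δ Δ \ A.thins Δ).card * (Δ.card * p) := by
    rw [← smul_eq_mul, ← sum_const]
    refine sum_congr rfl fun s hs => ?_
    obtain ⟨hs, hnt⟩ := mem_sdiff.1 hs
    obtain ⟨hsS, hsub⟩ := mem_basisRelsIn.1 hs
    exact card_eq_mul_of_hasValency hsS hsub hW.isFiber
      (hW.hasValency_of_not_isThinOn hsS hsub fun h => hnt (mem_thins.2 h))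
  have hthin : ∑ θ ∈ A.thins Δ, θ.card = p * Δ.card := by
    rw [← hW.card_thins, ← smul_eq_mul, ← sum_const]
    exact sum_congr rfl fun θ hθ => (mem_thins.1 hθ).card_eq hW.isFiber
  have hsum := sum_card_basisRelsIn hW.isFiber hW.isFiber
  rw [← sum_sdiff hsub, hnonthin, hthin, hW.card_eq] at hsum
  have key : ((A.basisRelsIn Δ Δ \ A.thins Δ).card + 1) * p ^ 3 = p * p ^ 3 := by
    linear_combination hsum
  have := Nat.eq_of_mul_eq_mul_right (pow_pos hp.pos 3) key
  omega

/-- The `p` translates of `s` by thin relations are non-thin, and there are only `p - 1`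
non-thin relations in `Δ`, so two of the translates coincide. -/
lemma hasBlockNbhds_of_not_isThinOn (hs : s ∈ A.S) (hsub : s ⊆ Δ ×ˢ Δ) (hnt : ¬ IsThinOn A Δ s)
    (hp : p.Prime) (hW : WreathFiber p A Δ) : HasBlockNbhds A Δ s := by
  have hmaps : ∀ θ ∈ A.thins Δ, relComp s θ ∈ A.basisRelsIn Δ Δ \ A.thins Δ := by
    intro θ hθ
    have hθ' := mem_thins.1 hθ
    refine mem_sdiff.2 ⟨mem_basisRelsIn.2 ⟨relComp_mem hs hsub hθ' hp hW,
      relComp_subset_product hsub hθ'.2.1⟩, fun hthin => hnt ?_⟩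
    rw [← relComp_diagRel hsub, ← relComp_star_of_isThinOn hθ' hp hW, ← relComp_assoc]
    exact (mem_thins.1 hthin).relComp (hθ'.star hp hW) hp hW
  have hlt : (A.basisRelsIn Δ Δ \ A.thins Δ).card < (A.thins Δ).card := by
    rw [card_basisRelsIn_sdiff_thins hp hW, hW.card_thins]
    exact Nat.sub_lt hp.pos one_pos
  obtain ⟨θ₁, hθ₁, θ₂, hθ₂, hne, heq⟩ := exists_ne_map_eq_of_card_lt_of_maps_to hlt hmaps
  exact hasBlockNbhds_of_relComp_eq hsub hp hW
    (hW.hasValency_of_not_isThinOn hs hsub hnt) (mem_thins.1 hθ₁) (mem_thins.1 hθ₂) hne heq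

lemma isRegularRel_of_subset_fiber (hs : s ∈ A.S) (hsub : s ⊆ Δ ×ˢ Δ) (hp : p.Prime)
    (hW : WreathFiber p A Δ) : IsRegularRel s := by
  by_cases hth : IsThinOn A Δ s
  · intro x c d y h1 h2 h3
    have hth' := hth.star hp hW
    have hxd : x = d :=
      (eq_thinMap hth' (mem_star.2 h1)).trans (eq_thinMap hth' (mem_star.2 h2)).symm
    exact hxd ▸ h3
  · exact (hasBlockNbhds_of_not_isThinOn hs hsub hth hp hW).isRegularRel

end WithinFiber

section RegularRelations

variable {A : CoherentConfig Ω} {p : ℕ} {u : Finset (Ω × Ω)} {Δ Γ : Finset Ω}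

/-- If two out-neighbours of `x` along `u` were in different blocks, the non-thin basis relation
`v` joining them would put `c` and its `p` neighbours along `v` into the `p`-set `nbhd u x`. -/
lemma hasBlockNbhds_of_isRegularRel (hu : u ∈ A.S) (hsub : u ⊆ Δ ×ˢ Γ) (hval : HasValency u p)
    (hreg : IsRegularRel u) (hW : WreathFiber p A Γ) : HasBlockNbhds A Γ u := by
  have hblock : ∀ {x c c' : Ω}, (x, c) ∈ u → (x, c') ∈ u → (c, c') ∈ A.blockRel Γ := by
    intro x c c' h1 h2
    set v := A.basisRel (c, c')
    have hv : v ∈ A.S := A.basisRel_mem _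
    have hc : c ∈ Γ := (mem_product.1 (hsub h1)).2
    have hvsub : v ⊆ Γ ×ˢ Γ := subset_product_of_mem hv hW.isFiber hW.isFiber (A.mem_basisRel _)
      hc (mem_product.1 (hsub h2)).2
    by_contra hnb
    have hnt : ¬ IsThinOn A Γ v := fun h => hnb (mem_blockRel.2 ⟨v, h, A.mem_basisRel _⟩)
    have hcc : c ∉ nbhd v c := fun hcc => hnt <| by
      rw [eq_of_mem_of_mem hv hW.isFiber (mem_nbhd.1 hcc) (mem_diagRel.2 ⟨hc, rfl⟩)]
      exact isThinOn_diagRel hW.isFiber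
    have hcu : A.c (star u) u v ≠ 0 :=
      c_ne_zero_of_mem (star_mem hu) hu hv (A.mem_basisRel _) (mem_star.2 h1) h2
    have hins : insert c (nbhd v c) ⊆ nbhd u x := by
      intro b hb
      rcases mem_insert.1 hb with rfl | hb
      · exact mem_nbhd.2 h1
      · obtain ⟨d, hd1, hd2⟩ := exists_of_c_ne_zero (star_mem hu) hu hv (mem_nbhd.1 hb) hcu
        exact mem_nbhd.2 (hreg h1 (mem_star.1 hd1) hd2)
    have := card_le_card hins
    rw [card_insert_of_notMem hcc, (hW.hasValency_of_not_isThinOn hv hvsub hnt).card_nbhd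
      (A.mem_basisRel _), hval.card_nbhd h1] at this
    omega
  intro x c hxc
  refine eq_of_subset_of_card_le (fun c' hc' => mem_nbhd.2 (hblock hxc (mem_nbhd.1 hc'))) ?_
  rw [card_nbhd_blockRel hW (mem_product.1 (hsub hxc)).2, hval.card_nbhd hxc]

lemma mem_of_mem_of_mem_blockRel (hu : u ∈ A.S) (hsub : u ⊆ Δ ×ˢ Γ)
    (hval : HasValency (star u) p) (hreg : IsRegularRel u) (hW : WreathFiber p A Δ)
    {x x' c : Ω} (hxc : (x, c) ∈ u) (hxx' : (x, x') ∈ A.blockRel Δ) : (x', c) ∈ u := by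
  have h := hasBlockNbhds_of_isRegularRel (star_mem hu) (star_subset_product hsub) hval hreg.star
    hW (mem_star.2 hxc)
  rw [← mem_star, ← mem_nbhd, h, mem_nbhd]
  exact hxx'

lemma mem_blockRel_of_mem_of_mem {v : Finset (Ω × Ω)} (hv : v ∈ A.S) (hvsub : v ⊆ Δ ×ˢ Δ)
    (hp : p.Prime) (hW : WreathFiber p A Δ) {a b b' : Ω} (h : (a, b) ∈ v) (h' : (a, b') ∈ v) :
    (b, b') ∈ A.blockRel Δ := by
  by_cases hth : IsThinOn A Δ v
  · rw [eq_thinMap hth h, ← eq_thinMap hth h']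
    exact blockRel_refl hW.isFiber (mem_product.1 (hvsub h')).2
  · rw [← mem_nbhd, ← hasBlockNbhds_of_not_isThinOn hv hvsub hth hp hW h, mem_nbhd]
    exact h'

lemma hasBlockNbhds_of_c_ne_zero {r t v : Finset (Ω × Ω)} {Ξ : Finset Ω} (hr : r ∈ A.S)
    (ht : t ∈ A.S) (hv : v ∈ A.S) (hc : A.c r t v ≠ 0)
    (hrblock : ∀ ⦃a b b' : Ω⦄, (a, b) ∈ r → (a, b') ∈ r → (b, b') ∈ A.blockRel Γ)
    (htsub : t ⊆ Γ ×ˢ Δ) (htval : HasValency t p) (htval' : HasValency (star t) p)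
    (htreg : IsRegularRel t) (hvsub : v ⊆ Ξ ×ˢ Δ) (hvval : HasValency v p)
    (hWΓ : WreathFiber p A Γ) (hWΔ : WreathFiber p A Δ) : HasBlockNbhds A Δ v := by
  intro x z hxz
  obtain ⟨c, hxc, hcz⟩ := exists_of_c_ne_zero hr ht hv hxz hc
  have htblock := hasBlockNbhds_of_isRegularRel ht htsub htval htreg hWΔ hcz
  refine eq_of_subset_of_card_le (fun z' hz' => ?_) ?_
  · obtain ⟨c', hxc', hcz'⟩ := exists_of_c_ne_zero hr ht hv (mem_nbhd.1 hz') hc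
    rw [← htblock, mem_nbhd]
    exact mem_of_mem_of_mem_blockRel ht htsub htval' htreg hWΓ hcz' (hrblock hxc' hxc)
  · rw [card_nbhd_blockRel hWΔ (mem_product.1 (hvsub hxz)).2, hvval.card_nbhd hxz]

end RegularRelations

structure IsWreathConfig (p : ℕ) (A : CoherentConfig Ω) : Prop where
  prime : p.Prime
  wreathFiber : ∀ Δ : Finset Ω, IsFiber A Δ → WreathFiber p A Δ
  hasValency : ∀ u ∈ A.S, ∀ Δ Γ : Finset Ω, IsFiber A Δ → IsFiber A Γ → Δ ≠ Γ →
    u ⊆ Δ ×ˢ Γ → HasValency u p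

def RegJoined (A : CoherentConfig Ω) (Δ Γ : Finset Ω) : Prop :=
  ∃ r ∈ A.S, r ⊆ Δ ×ˢ Γ ∧ IsRegularRel r

lemma RegJoined.symm {A : CoherentConfig Ω} {Δ Γ : Finset Ω} (h : RegJoined A Δ Γ) :
    RegJoined A Γ Δ :=
  let ⟨r, hr, hsub, hreg⟩ := h
  ⟨star r, star_mem hr, star_subset_product hsub, hreg.star⟩

lemma regJoined_refl {A : CoherentConfig Ω} {Δ : Finset Ω} (hΔ : IsFiber A Δ) :
    RegJoined A Δ Δ := by
  refine ⟨diagRel Δ, hΔ, (isThinOn_diagRel hΔ).2.1, fun x c d y h1 h2 h3 => ?_⟩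
  obtain ⟨-, rfl⟩ := mem_diagRel.1 h1
  obtain ⟨-, rfl⟩ := mem_diagRel.1 h2
  exact h3

/-- The block of `l ∈ Λ` and the sets `nbhd (star t) x`, `nbhd (star w) c`: for `x ∈ nbhd t l`
and `c ∈ nbhd w l` these are lines through `l` in the affine-plane picture of `Λ`. -/
noncomputable def lines (A : CoherentConfig Ω) (Λ : Finset Ω) (l : Ω) (t w : Finset (Ω × Ω)) :
    Option (Ω ⊕ Ω) → Finset Ω :=
  fun i => i.elim (nbhd (A.blockRel Λ) l) (Sum.elim (nbhd (star t)) (nbhd (star w)))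

def lineIndices (l : Ω) (t w : Finset (Ω × Ω)) : Finset (Option (Ω ⊕ Ω)) :=
  insertNone ((nbhd t l).disjSum (nbhd w l))

lemma some_inl_mem_lineIndices {l x : Ω} {t w : Finset (Ω × Ω)} :
    some (.inl x) ∈ lineIndices l t w ↔ (l, x) ∈ t := by
  simp [lineIndices]

lemma some_inr_mem_lineIndices {l c : Ω} {t w : Finset (Ω × Ω)} :
    some (.inr c) ∈ lineIndices l t w ↔ (l, c) ∈ w := by
  simp [lineIndices]

lemma card_lineIndices (l : Ω) (t w : Finset (Ω × Ω)) :
    (lineIndices l t w).card = (nbhd t l).card + (nbhd w l).card + 1 := by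
  simp [lineIndices]

namespace IsWreathConfig

variable {A : CoherentConfig Ω} {p : ℕ} {t u w : Finset (Ω × Ω)} {Δ Γ Λ : Finset Ω} {l : Ω}

lemma hasValency_star (hA : IsWreathConfig p A) (hu : u ∈ A.S) (hΔ : IsFiber A Δ)
    (hΓ : IsFiber A Γ) (hne : Δ ≠ Γ) (hsub : u ⊆ Δ ×ˢ Γ) : HasValency (star u) p :=
  hA.hasValency _ (star_mem hu) Γ Δ hΓ hΔ hne.symm (star_subset_product hsub)

lemma card_nbhd (hA : IsWreathConfig p A) (hu : u ∈ A.S) (hΔ : IsFiber A Δ) (hΓ : IsFiber A Γ)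
    (hne : Δ ≠ Γ) (hsub : u ⊆ Δ ×ˢ Γ) {a : Ω} (ha : a ∈ Δ) : (nbhd u a).card = p :=
  let ⟨_, hb⟩ := nbhd_nonempty hu hsub hΔ ha
  (hA.hasValency u hu Δ Γ hΔ hΓ hne hsub).card_nbhd (mem_nbhd.1 hb)

lemma card_basisRelsIn (hA : IsWreathConfig p A) (hΔ : IsFiber A Δ) (hΓ : IsFiber A Γ)
    (hne : Δ ≠ Γ) : (A.basisRelsIn Δ Γ).card = p := by
  have hsum := sum_card_basisRelsIn hΔ hΓ
  rw [sum_congr rfl fun s hs => card_eq_mul_of_hasValency (mem_basisRelsIn.1 hs).1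
    (mem_basisRelsIn.1 hs).2 hΔ (hA.hasValency s (mem_basisRelsIn.1 hs).1 Δ Γ hΔ hΓ hne
      (mem_basisRelsIn.1 hs).2), sum_const, smul_eq_mul, (hA.wreathFiber Δ hΔ).card_eq,
    (hA.wreathFiber Γ hΓ).card_eq] at hsum
  have key : (A.basisRelsIn Δ Γ).card * p ^ 3 = p * p ^ 3 := by linear_combination hsum
  exact Nat.eq_of_mul_eq_mul_right (pow_pos hA.prime.pos 3) key

lemma isRegularRel_of_regJoined (hA : IsWreathConfig p A) (hΛ : IsFiber A Λ) (hΔ : IsFiber A Δ)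
    (hJ : RegJoined A Λ Δ) (ht : t ∈ A.S) (htsub : t ⊆ Λ ×ˢ Δ) : IsRegularRel t := by
  obtain rfl | hne := eq_or_ne Λ Δ
  · exact isRegularRel_of_subset_fiber ht htsub hA.prime (hA.wreathFiber Λ hΛ)
  obtain ⟨r, hr, hrsub, hrreg⟩ := hJ
  obtain ⟨⟨l, c⟩, hlc⟩ := A.nonempty_mem t ht
  obtain ⟨μ, hμ⟩ := nbhd_nonempty (star_mem hr) (star_subset_product hrsub) hΔ
    (mem_product.1 (htsub hlc)).2
  have hμc : (μ, c) ∈ r := mem_star.1 (mem_nbhd.1 hμ)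
  have hv := A.basisRel_mem (l, μ)
  have hvsub : A.basisRel (l, μ) ⊆ Λ ×ˢ Λ := subset_product_of_mem hv hΛ hΛ (A.mem_basisRel _)
    (mem_product.1 (htsub hlc)).1 (mem_product.1 (hrsub hμc)).1
  have hWΛ := hA.wreathFiber Λ hΛ
  refine (hasBlockNbhds_of_c_ne_zero hv hr ht
    (c_ne_zero_of_mem hv hr ht hlc (A.mem_basisRel _) hμc)
    (fun _ _ _ h h' => mem_blockRel_of_mem_of_mem hv hvsub hA.prime hWΛ h h') hrsub
    (hA.hasValency r hr Λ Δ hΛ hΔ hne hrsub) (hA.hasValency_star hr hΛ hΔ hne hrsub) hrreg htsub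
    (hA.hasValency t ht Λ Δ hΛ hΔ hne htsub) hWΛ (hA.wreathFiber Δ hΔ)).isRegularRel

lemma regJoined_trans (hA : IsWreathConfig p A) (hΔ : IsFiber A Δ) (hΓ : IsFiber A Γ)
    (hΛ : IsFiber A Λ) (h₁ : RegJoined A Δ Γ) (h₂ : RegJoined A Γ Λ) : RegJoined A Δ Λ := by
  obtain rfl | hΔΓ := eq_or_ne Δ Γ
  · exact h₂
  obtain rfl | hΓΛ := eq_or_ne Γ Λ
  · exact h₁
  obtain rfl | hΔΛ := eq_or_ne Δ Λ
  · exact regJoined_refl hΔ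
  obtain ⟨r, hr, hrsub, hrreg⟩ := h₁
  obtain ⟨r', hr', hr'sub, hr'reg⟩ := h₂
  obtain ⟨⟨x, y⟩, hxy⟩ := A.nonempty_mem r hr
  obtain ⟨z, hz⟩ := nbhd_nonempty hr' hr'sub hΓ (mem_product.1 (hrsub hxy)).2
  have hyz : (y, z) ∈ r' := mem_nbhd.1 hz
  have hv := A.basisRel_mem (x, z)
  have hvsub : A.basisRel (x, z) ⊆ Δ ×ˢ Λ := subset_product_of_mem hv hΔ hΛ (A.mem_basisRel _)
    (mem_product.1 (hrsub hxy)).1 (mem_product.1 (hr'sub hyz)).2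
  have hWΓ := hA.wreathFiber Γ hΓ
  have hrblock := hasBlockNbhds_of_isRegularRel hr hrsub
    (hA.hasValency r hr Δ Γ hΔ hΓ hΔΓ hrsub) hrreg hWΓ
  refine ⟨_, hv, hvsub, (hasBlockNbhds_of_c_ne_zero hr hr' hv
    (c_ne_zero_of_mem hr hr' hv (A.mem_basisRel _) hxy hyz) (fun _ _ _ h h' => ?_) hr'sub
    (hA.hasValency r' hr' Γ Λ hΓ hΛ hΓΛ hr'sub) (hA.hasValency_star hr' hΓ hΛ hΓΛ hr'sub) hr'reg
    hvsub (hA.hasValency _ hv Δ Λ hΔ hΛ hΔΛ hvsub) hWΓ (hA.wreathFiber Λ hΛ)).isRegularRel⟩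
  rw [← mem_nbhd, ← hrblock h, mem_nbhd]
  exact h'

lemma injOn_relComp_of_not_isRegularRel (hA : IsWreathConfig p A) (hΛ : IsFiber A Λ)
    (hΔ : IsFiber A Δ) (hne : Λ ≠ Δ) (htsub : t ⊆ Λ ×ˢ Δ) (ht : t ∈ A.S)
    (hnreg : ¬ IsRegularRel t) : Set.InjOn (relComp t) (A.thins Δ : Set (Finset (Ω × Ω))) := by
  intro θ₁ hθ₁ θ₂ hθ₂ heq
  by_contra hne'
  exact hnreg (hasBlockNbhds_of_relComp_eq htsub hA.prime (hA.wreathFiber Δ hΔ)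
    (hA.hasValency t ht Λ Δ hΛ hΔ hne htsub) (mem_thins.1 hθ₁) (mem_thins.1 hθ₂) hne'
    heq).isRegularRel

/-- The `p` translates of a non-regular `t` by thin relations are all the basis relations from
`Λ` to `Δ`, and they meet a block in equally many points; these counts add up to `p`. -/
lemma card_nbhd_inter_block_eq_one (hA : IsWreathConfig p A) (hΛ : IsFiber A Λ)
    (hΔ : IsFiber A Δ) (hne : Λ ≠ Δ) (ht : t ∈ A.S) (htsub : t ⊆ Λ ×ˢ Δ)
    (hnreg : ¬ IsRegularRel t) {a c : Ω} (ha : a ∈ Λ) (hc : c ∈ Δ) :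
    (nbhd t a ∩ nbhd (A.blockRel Δ) c).card = 1 := by
  have hW := hA.wreathFiber Δ hΔ
  have hinj := hA.injOn_relComp_of_not_isRegularRel hΛ hΔ hne htsub ht hnreg
  have himage : (A.thins Δ).image (relComp t) = A.basisRelsIn Λ Δ := by
    refine eq_of_subset_of_card_le (fun s hs => ?_) ?_
    · obtain ⟨θ, hθ, rfl⟩ := mem_image.1 hs
      exact mem_basisRelsIn.2 ⟨relComp_mem ht htsub (mem_thins.1 hθ) hA.prime hW,
        relComp_subset_product htsub (mem_thins.1 hθ).2.1⟩
    · rw [hA.card_basisRelsIn hΛ hΔ hne, card_image_of_injOn hinj, hW.card_thins]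
  have hsum := sum_card_nbhd_inter hΛ hΔ ha (B := nbhd (A.blockRel Δ) c)
    fun b hb => (mem_product.1 (blockRel_subset (mem_nbhd.1 hb))).2
  rw [← himage, sum_image hinj, card_nbhd_blockRel hW hc, sum_congr rfl fun θ hθ => by
    rw [nbhd_relComp_inter_block htsub (mem_thins.1 hθ) hA.prime hW,
      card_image_of_injOn ((thinMap_injOn (mem_thins.1 hθ) hA.prime hW).mono fun b hb =>
        (mem_product.1 (htsub (mem_nbhd.1 (mem_inter.1 hb).1))).2)], sum_const,
    hW.card_thins, smul_eq_mul] at hsum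
  exact Nat.eq_of_mul_eq_mul_left hA.prime.pos (hsum.trans (mul_one p).symm)

lemma card_nbhd_star_inter_nbhd_star_eq_one (hA : IsWreathConfig p A) (hΛ : IsFiber A Λ)
    (hΔ : IsFiber A Δ) (hne : Λ ≠ Δ) (ht : t ∈ A.S) (htsub : t ⊆ Λ ×ˢ Δ)
    (hnreg : ¬ IsRegularRel t) {l x x' : Ω} (hx : (l, x) ∈ t) (hx' : (l, x') ∈ t)
    (hxx' : x ≠ x') : (nbhd (star t) x ∩ nbhd (star t) x').card = 1 := by
  have hW := hA.wreathFiber Δ hΔ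
  have hxΔ := (mem_product.1 (htsub hx)).2
  have hx'Δ := (mem_product.1 (htsub hx')).2
  have hv := A.basisRel_mem (x, x')
  have hdiff : (x', x) ∉ A.blockRel Δ := fun h => hxx' <| card_le_one.1
    (hA.card_nbhd_inter_block_eq_one hΛ hΔ hne ht htsub hnreg (mem_product.1 (htsub hx)).1
      hx'Δ).le x (mem_inter.2 ⟨mem_nbhd.2 hx, mem_nbhd.2 h⟩)
    x' (mem_inter.2 ⟨mem_nbhd.2 hx', mem_nbhd.2 (blockRel_refl hΔ hx'Δ)⟩)
  have hnt : ¬ IsThinOn A Δ (A.basisRel (x, x')) := fun h =>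
    hdiff (blockRel_symm hA.prime hW (mem_blockRel.2 ⟨_, h, A.mem_basisRel _⟩))
  have hblock := hasBlockNbhds_of_not_isThinOn hv
    (subset_product_of_mem hv hΔ hΔ (A.mem_basisRel _) hxΔ hx'Δ) hnt hA.prime hW
    (A.mem_basisRel _)
  refine card_nbhd_inter_nbhd_star_eq_one (star_mem ht) ht hv
    (mem_nbhd.2 (blockRel_refl hΔ hx'Δ)) (fun z hz => mem_nbhd.1 (hblock ▸ hz)) hA.prime.pos
    (card_nbhd_blockRel hW hx'Δ)
    (hA.card_nbhd (star_mem ht) hΔ hΛ hne.symm (star_subset_product htsub) hxΔ) fun l hl => ?_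
  exact hA.card_nbhd_inter_block_eq_one hΛ hΔ hne ht htsub hnreg
    (mem_product.1 (htsub (mem_star.1 (mem_nbhd.1 hl)))).1 hx'Δ

lemma card_nbhd_star_inter_nbhd_star_eq_one_of_regJoined (hA : IsWreathConfig p A)
    (hΛ : IsFiber A Λ) (hΔ : IsFiber A Δ) (hΓ : IsFiber A Γ) (hΛΔ : Λ ≠ Δ) (hΛΓ : Λ ≠ Γ)
    (hΔΓ : Δ ≠ Γ) (hJ : RegJoined A Δ Γ) (ht : t ∈ A.S) (htsub : t ⊆ Λ ×ˢ Δ) (hw : w ∈ A.S)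
    (hwsub : w ⊆ Λ ×ˢ Γ) (hwnreg : ¬ IsRegularRel w) {x c : Ω} (hx : x ∈ Δ) (hc : c ∈ Γ) :
    (nbhd (star t) x ∩ nbhd (star w) c).card = 1 := by
  have hW := hA.wreathFiber Γ hΓ
  have hv := A.basisRel_mem (x, c)
  have hvsub := subset_product_of_mem hv hΔ hΓ (A.mem_basisRel _) hx hc
  have hblock := hasBlockNbhds_of_isRegularRel hv hvsub (hA.hasValency _ hv Δ Γ hΔ hΓ hΔΓ hvsub)
    (hA.isRegularRel_of_regJoined hΔ hΓ hJ hv hvsub) hW (A.mem_basisRel _)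
  refine card_nbhd_inter_nbhd_star_eq_one (star_mem ht) hw hv
    (mem_nbhd.2 (blockRel_refl hΓ hc)) (fun z hz => mem_nbhd.1 (hblock ▸ hz)) hA.prime.pos
    (card_nbhd_blockRel hW hc)
    (hA.card_nbhd (star_mem ht) hΔ hΛ hΛΔ.symm (star_subset_product htsub) hx) fun l hl => ?_
  exact hA.card_nbhd_inter_block_eq_one hΛ hΓ hΛΓ hw hwsub hwnreg
    (mem_product.1 (htsub (mem_star.1 (mem_nbhd.1 hl)))).1 hc

lemma lines_subset_and_mem_and_card (hA : IsWreathConfig p A) (hΛ : IsFiber A Λ)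
    (hΔ : IsFiber A Δ) (hΓ : IsFiber A Γ) (hΛΔ : Λ ≠ Δ) (hΛΓ : Λ ≠ Γ) (ht : t ∈ A.S)
    (htsub : t ⊆ Λ ×ˢ Δ) (hw : w ∈ A.S) (hwsub : w ⊆ Λ ×ˢ Γ) (hl : l ∈ Λ) :
    ∀ i ∈ lineIndices l t w, lines A Λ l t w i ⊆ Λ ∧ l ∈ lines A Λ l t w i ∧
      (lines A Λ l t w i).card = p := by
  have hstar {s : Finset (Ω × Ω)} {X : Finset Ω} (hX : IsFiber A X) (hne : Λ ≠ X) (hs : s ∈ A.S)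
      (hsub : s ⊆ Λ ×ˢ X) {x : Ω} (hx : (l, x) ∈ s) :
      nbhd (star s) x ⊆ Λ ∧ l ∈ nbhd (star s) x ∧ (nbhd (star s) x).card = p :=
    ⟨fun _ hm => (mem_product.1 (hsub (mem_star.1 (mem_nbhd.1 hm)))).1,
      mem_nbhd.2 (mem_star.2 hx),
      hA.card_nbhd (star_mem hs) hX hΛ hne.symm (star_subset_product hsub)
        (mem_product.1 (hsub hx)).2⟩
  rintro (_ | x | c) hi
  · exact ⟨fun _ hm => (mem_product.1 (blockRel_subset (mem_nbhd.1 hm))).2,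
      mem_nbhd.2 (blockRel_refl hΛ hl), card_nbhd_blockRel (hA.wreathFiber Λ hΛ) hl⟩
  · exact hstar hΔ hΛΔ ht htsub (some_inl_mem_lineIndices.1 hi)
  · exact hstar hΓ hΛΓ hw hwsub (some_inr_mem_lineIndices.1 hi)

lemma card_lines_inter_lines (hA : IsWreathConfig p A) (hΛ : IsFiber A Λ) (hΔ : IsFiber A Δ)
    (hΓ : IsFiber A Γ) (hΛΔ : Λ ≠ Δ) (hΛΓ : Λ ≠ Γ) (hΔΓ : Δ ≠ Γ) (hJ : RegJoined A Δ Γ)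
    (ht : t ∈ A.S) (htsub : t ⊆ Λ ×ˢ Δ) (htnreg : ¬ IsRegularRel t) (hw : w ∈ A.S)
    (hwsub : w ⊆ Λ ×ˢ Γ) (hwnreg : ¬ IsRegularRel w) (hl : l ∈ Λ) :
    ∀ i ∈ lineIndices l t w, ∀ j ∈ lineIndices l t w, i ≠ j →
      (lines A Λ l t w i ∩ lines A Λ l t w j).card = 1 := by
  have hLB {x : Ω} (hx : (l, x) ∈ t) :
      (nbhd (star t) x ∩ nbhd (A.blockRel Λ) l).card = 1 :=
    hA.card_nbhd_inter_block_eq_one hΔ hΛ hΛΔ.symm (star_mem ht) (star_subset_product htsub)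
      (mt isRegularRel_star_iff.1 htnreg) (mem_product.1 (htsub hx)).2 hl
  have hMB {c : Ω} (hc : (l, c) ∈ w) :
      (nbhd (star w) c ∩ nbhd (A.blockRel Λ) l).card = 1 :=
    hA.card_nbhd_inter_block_eq_one hΓ hΛ hΛΓ.symm (star_mem hw) (star_subset_product hwsub)
      (mt isRegularRel_star_iff.1 hwnreg) (mem_product.1 (hwsub hc)).2 hl
  have hLM {x c : Ω} (hx : (l, x) ∈ t) (hc : (l, c) ∈ w) :
      (nbhd (star t) x ∩ nbhd (star w) c).card = 1 :=
    hA.card_nbhd_star_inter_nbhd_star_eq_one_of_regJoined hΛ hΔ hΓ hΛΔ hΛΓ hΔΓ hJ ht htsub hw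
      hwsub hwnreg (mem_product.1 (htsub hx)).2 (mem_product.1 (hwsub hc)).2
  have hIt {x : Ω} (hi : some (.inl x) ∈ lineIndices l t w) := some_inl_mem_lineIndices.1 hi
  have hIw {c : Ω} (hi : some (.inr c) ∈ lineIndices l t w) := some_inr_mem_lineIndices.1 hi
  rintro (_ | x | c) hi (_ | x' | c') hj hij
  · exact absurd rfl hij
  · rw [inter_comm]
    exact hLB (hIt hj)
  · rw [inter_comm]
    exact hMB (hIw hj)
  · exact hLB (hIt hi)
  · exact hA.card_nbhd_star_inter_nbhd_star_eq_one hΛ hΔ hΛΔ ht htsub htnreg (hIt hi) (hIt hj)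
      fun h => hij (h ▸ rfl)
  · exact hLM (hIt hi) (hIw hj)
  · exact hMB (hIw hi)
  · rw [inter_comm]
    exact hLM (hIt hj) (hIw hi)
  · exact hA.card_nbhd_star_inter_nbhd_star_eq_one hΛ hΓ hΛΓ hw hwsub hwnreg (hIw hi) (hIw hj)
      fun h => hij (h ▸ rfl)

/-- The `2p + 1` lines through `l` pairwise meet only in `l`; they do not fit into the `p²`
points of `Λ`. -/
lemma regJoined_or_regJoined (hA : IsWreathConfig p A) (hΛ : IsFiber A Λ) (hΔ : IsFiber A Δ)
    (hΓ : IsFiber A Γ) (hΔΓ : Δ ≠ Γ) (hJ : RegJoined A Δ Γ) :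
    RegJoined A Λ Δ ∨ RegJoined A Λ Γ := by
  by_contra! ⟨hnΔ, hnΓ⟩
  have hΛΔ : Λ ≠ Δ := by rintro rfl; exact hnΔ (regJoined_refl hΛ)
  have hΛΓ : Λ ≠ Γ := by rintro rfl; exact hnΓ (regJoined_refl hΛ)
  have hpos := hA.prime.pos
  have hne (X : Finset Ω) (hX : IsFiber A X) : X.Nonempty :=
    card_pos.1 ((hA.wreathFiber X hX).card_eq ▸ pow_pos hpos 2)
  obtain ⟨l, hl⟩ := hne Λ hΛ
  obtain ⟨x, hx⟩ := hne Δ hΔ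
  obtain ⟨c, hc⟩ := hne Γ hΓ
  set t := A.basisRel (l, x)
  set w := A.basisRel (l, c)
  have ht : t ∈ A.S := A.basisRel_mem _
  have hw : w ∈ A.S := A.basisRel_mem _
  have htsub := subset_product_of_mem ht hΛ hΔ (A.mem_basisRel _) hl hx
  have hwsub := subset_product_of_mem hw hΛ hΓ (A.mem_basisRel _) hl hc
  have hline := hA.lines_subset_and_mem_and_card hΛ hΔ hΓ hΛΔ hΛΓ ht htsub hw hwsub hl
  have key := card_mul_le_card_erase_of_card_inter_eq_one (fun i hi => (hline i hi).1)
    (fun i hi => (hline i hi).2.1) (fun i hi => (hline i hi).2.2)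
    (hA.card_lines_inter_lines hΛ hΔ hΓ hΛΔ hΛΓ hΔΓ hJ ht htsub
      (fun h => hnΔ ⟨t, ht, htsub, h⟩) hw hwsub (fun h => hnΓ ⟨w, hw, hwsub, h⟩) hl)
  rw [card_lineIndices, hA.card_nbhd ht hΛ hΔ hΛΔ htsub hl,
    hA.card_nbhd hw hΛ hΓ hΛΓ hwsub hl, card_erase_of_mem hl, (hA.wreathFiber Λ hΛ).card_eq] at key
  have h2 := hA.prime.two_le
  zify [hpos, Nat.one_le_pow 2 p hpos] at key
  nlinarith

lemma forall_isRegularRel_of_regJoined (hA : IsWreathConfig p A) (hΔ : IsFiber A Δ)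
    (hΓ : IsFiber A Γ) (hne : Δ ≠ Γ) (hJ : RegJoined A Δ Γ) : ∀ t ∈ A.S, IsRegularRel t := by
  have hall (X : Finset Ω) (hX : IsFiber A X) : RegJoined A X Δ :=
    (hA.regJoined_or_regJoined hX hΔ hΓ hne hJ).elim id fun h =>
      hA.regJoined_trans hX hΓ hΔ h hJ.symm
  intro t ht
  obtain ⟨⟨a, b⟩, hab⟩ := A.nonempty_mem t ht
  have ha := isFiber_fiberOf (A := A) a
  have hb := isFiber_fiberOf (A := A) b
  exact hA.isRegularRel_of_regJoined ha hb
    (hA.regJoined_trans ha hΔ hb (hall _ ha) (hall _ hb).symm) ht (subset_fiberOf_product ht hab)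

end IsWreathConfig

end CoherentConfig

open CoherentConfig

theorem stmt15 (p : ℕ) (hp : p.Prime) (A : CoherentConfig Ω)
    (hfib : ∀ Δ : Finset Ω, IsFiber A Δ → WreathFiber p A Δ)
    (hinter : ∀ u ∈ A.S, ∀ Δ Γ : Finset Ω, IsFiber A Δ → IsFiber A Γ → Δ ≠ Γ →
      u ⊆ Δ ×ˢ Γ → HasValency u p) :
    (∀ s ∈ A.S, Regular A s) ∨
    (∀ s ∈ A.S, (∃ Δ : Finset Ω, IsFiber A Δ ∧ s ⊆ Δ ×ˢ Δ) ∨ ¬ Regular A s) := by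
  have hA : IsWreathConfig p A := ⟨hp, hfib, hinter⟩
  refine or_iff_not_imp_right.2 fun h => ?_
  push Not at h
  obtain ⟨u, hu, hnot, hreg⟩ := h
  obtain ⟨⟨a, b⟩, hab⟩ := A.nonempty_mem u hu
  have husub := subset_fiberOf_product hu hab
  have hne : A.fiberOf a ≠ A.fiberOf b := fun h => hnot _ (isFiber_fiberOf a) (h ▸ husub)
  intro s hs
  exact regular_of_isRegularRel hs <| hA.forall_isRegularRel_of_regJoined (isFiber_fiberOf a)
    (isFiber_fiberOf b) hne ⟨u, hu, husub, isRegularRel_of_regular hu hreg⟩ s hs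
end
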